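/- arXiv:1804.04916 — 4 statements merged into one kernel-verified Lean document; each statement's English description precedes it below -/
import Mathlib

section
/- Under the setup below, there exist constants 0 < c ≤ C, depending only on the constants in the assumptions (in particular not on K, h, or the particular partition), such that c·h^d ≤ λ_min(Q_m) ≤ λ_max(Q_m) ≤ C·h^d, where Q_m := ∫_𝒳 p(x)p(x)'f(x)dx is the population Gram matrix of the basis. (Lemma SA-1, population part.) -/
open MeasureTheory Filter Metric Matrix
open scoped BigOperators ENNReal

noncomputable section

/-- Euclidean space `ℝ^d`. -/
abbrev Euc (d : ℕ) := EuclideanSpace ℝ (Fin d)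

/-- Order `[q]` of a multi-index. -/
def mOrder {d : ℕ} (q : Fin d → ℕ) : ℕ := ∑ i, q i

/-- Partial derivative in the `i`-th coordinate direction. -/
noncomputable def lineD {d : ℕ} (i : Fin d) (f : Euc d → ℝ) : Euc d → ℝ :=
  fun x => lineDeriv ℝ f x (EuclideanSpace.single i 1)

/-- Multi-index partial derivative `∂^q f`. -/
noncomputable def mderiv {d : ℕ} (q : Fin d → ℕ) (f : Euc d → ℝ) : Euc d → ℝ :=
  (List.finRange d).foldr (fun i g => (lineD i)^[q i] g) f

/-- Euclidean norm of a vector in `ℝ^K`. -/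
noncomputable def eNorm {K : ℕ} (v : Fin K → ℝ) : ℝ := Real.sqrt (∑ k, v k ^ 2)

/-- Sup-norm of a vector. -/
noncomputable def vSupNorm {K : ℕ} (v : Fin K → ℝ) : ℝ := ⨆ k, |v k|

/-- Quadratic form `v'Av`. -/
def quadForm {ι : Type*} [Fintype ι] (A : Matrix ι ι ℝ) (v : ι → ℝ) : ℝ :=
  ∑ k, ∑ l, v k * A k l * v l

/-- Minimum eigenvalue of a symmetric matrix, as the infimum of its Rayleigh quotient. -/
noncomputable def lamMin {ι : Type*} [Fintype ι] (A : Matrix ι ι ℝ) : ℝ :=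
  sInf {r | ∃ v : ι → ℝ, ∑ k, v k ^ 2 = 1 ∧ r = quadForm A v}

/-- Maximum eigenvalue of a symmetric matrix, as the supremum of its Rayleigh quotient. -/
noncomputable def lamMax {ι : Type*} [Fintype ι] (A : Matrix ι ι ℝ) : ℝ :=
  sSup {r | ∃ v : ι → ℝ, ∑ k, v k ^ 2 = 1 ∧ r = quadForm A v}

/-- Maximum absolute row-sum norm `‖A‖_∞` of a matrix. -/
noncomputable def rowSumNorm {ι : Type*} [Fintype ι] (A : Matrix ι ι ℝ) : ℝ :=
  ⨆ k, ∑ l, |A k l|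

/-- Spectral norm (`ℓ²`-operator norm) of a matrix. -/
noncomputable def specNorm {ι : Type*} [Fintype ι] [DecidableEq ι] (A : Matrix ι ι ℝ) : ℝ :=
  ‖LinearMap.toContinuousLinearMap (Matrix.toEuclideanLin A)‖

/-- Open polyhedron: a finite intersection of open halfspaces. -/
def IsOpenPolyhedron {d : ℕ} (s : Set (Euc d)) : Prop :=
  ∃ (N : ℕ) (a : Fin N → Euc d) (b : Fin N → ℝ),
    s = {x | ∀ i, (inner ℝ (a i) x : ℝ) < b i}

/-!
For a unit vector `v`, `v'Q_m v = ∫_𝒳 (v'p)² f`, and `f₁ ≤ f ≤ f₂` on `𝒳`, so it suffices to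
bound `∫_𝒳 (v'p)²` by multiples of `h^d`. Cell boundaries are null, so this integral is the sum
of the integrals over the cells. Below: summing the local condition (b) over `k` gives
`c₀ h^d ≤ ∑_k ∫_{H_k} (v'p)²`, and a cell lies in `H_k` only for the at most `M` indices `k`
active on it. Above: on a cell only the active `p_k` survive, so by Cauchy–Schwarz
`(v'p)² ≤ c₂² ∑_{k active} v_k²`; a cell has volume at most `|B(0,1)| h^d`, and each `v_k²` is
counted once for each of the at most `M` cells in `H_k`.
-/

theorem lamMin_lamMax_bounds {ι : Type*} [Fintype ι] [Nonempty ι] {A : Matrix ι ι ℝ} {a b : ℝ}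
    (hA : ∀ v : ι → ℝ, ∑ k, v k ^ 2 = 1 → a ≤ quadForm A v ∧ quadForm A v ≤ b) :
    a ≤ lamMin A ∧ lamMin A ≤ lamMax A ∧ lamMax A ≤ b := by
  classical
  set R := {r | ∃ v : ι → ℝ, ∑ k, v k ^ 2 = 1 ∧ r = quadForm A v}
  have hlow : ∀ r ∈ R, a ≤ r := by rintro r ⟨v, hv, rfl⟩; exact (hA v hv).1
  have hup : ∀ r ∈ R, r ≤ b := by rintro r ⟨v, hv, rfl⟩; exact (hA v hv).2
  obtain ⟨i⟩ := ‹Nonempty ι›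
  have hR : R.Nonempty := ⟨_, Pi.single i 1, by simp [Pi.single_apply], rfl⟩
  exact ⟨le_csInf hR hlow, csInf_le_csSup hR ⟨a, hlow⟩ ⟨b, hup⟩, csSup_le hR hup⟩

theorem quadForm_integral_eq {E ι : Type*} [MeasurableSpace E] [Fintype ι] {μ : Measure E}
    {p : E → ι → ℝ} {w : E → ℝ} (hint : ∀ k l, Integrable (fun x => p x k * p x l * w x) μ)
    (v : ι → ℝ) :
    quadForm (fun k l => ∫ x, p x k * p x l * w x ∂μ) v = ∫ x, (∑ j, v j * p x j) ^ 2 * w x ∂μ := by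
  have hexpand : ∀ x, (∑ j, v j * p x j) ^ 2 * w x
      = ∑ k, ∑ l, v k * (p x k * p x l * w x) * v l := fun x => by
    rw [sq, Finset.sum_mul_sum, Finset.sum_mul]
    refine Finset.sum_congr rfl fun k _ => ?_
    rw [Finset.sum_mul]
    exact Finset.sum_congr rfl fun l _ => by ring
  have hint' : ∀ k l, Integrable (fun x => v k * (p x k * p x l * w x) * v l) μ :=
    fun k l => ((hint k l).const_mul _).mul_const _
  simp only [quadForm, hexpand]
  rw [integral_finsetSum _ fun k _ => integrable_finsetSum _ fun l _ => hint' k l]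
  refine Finset.sum_congr rfl fun k _ => ?_
  rw [integral_finsetSum _ fun l _ => hint' k l]
  simp only [integral_mul_const, integral_const_mul]

theorem sum_sq_le_sq_of_eNorm_le {K : ℕ} {v : Fin K → ℝ} {c : ℝ} (hv : eNorm v ≤ c) :
    ∑ k, v k ^ 2 ≤ c ^ 2 :=
  (Real.sq_sqrt (Finset.sum_nonneg fun k _ => sq_nonneg (v k))).symm.le.trans
    (pow_le_pow_left₀ (Real.sqrt_nonneg _) hv 2)

theorem abs_le_eNorm {K : ℕ} (v : Fin K → ℝ) (k : Fin K) : |v k| ≤ eNorm v :=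
  Real.abs_le_sqrt (Finset.single_le_sum (fun j _ => sq_nonneg (v j)) (Finset.mem_univ k))

theorem setIntegral_mul_mem_Icc {E : Type*} [MeasurableSpace E] {μ : Measure E} {s : Set E}
    {g w : E → ℝ} {a b : ℝ} (hs : MeasurableSet s) (hg : ∀ x ∈ s, 0 ≤ g x)
    (hgi : IntegrableOn g s μ) (hwm : AEStronglyMeasurable w (μ.restrict s))
    (hw : ∀ x ∈ s, w x ∈ Set.Icc a b) :
    ∫ x in s, g x * w x ∂μ ∈ Set.Icc (a * ∫ x in s, g x ∂μ) (b * ∫ x in s, g x ∂μ) := by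
  have hgwi : IntegrableOn (fun x => g x * w x) s μ :=
    hgi.mul_bdd hwm ((ae_restrict_iff' hs).2 (.of_forall fun x hx =>
      abs_le_max_abs_abs (hw x hx).1 (hw x hx).2))
  simp only [Set.mem_Icc, ← integral_const_mul]
  exact ⟨setIntegral_mono_on (hgi.const_mul a) hgwi hs fun x hx => by
      rw [mul_comm]; exact mul_le_mul_of_nonneg_left (hw x hx).1 (hg x hx),
    setIntegral_mono_on hgwi (hgi.const_mul b) hs fun x hx => by
      rw [mul_comm b]; exact mul_le_mul_of_nonneg_left (hw x hx).2 (hg x hx)⟩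

section Compact

variable {X : Type*} [TopologicalSpace X] [T2Space X] [MeasurableSpace X] [OpensMeasurableSpace X]
  {μ : Measure X} [IsFiniteMeasureOnCompacts μ] {s : Set X}

theorem IsCompact.integrableOn_of_abs_le (hs : IsCompact s) {φ : X → ℝ} (hφ : Measurable φ)
    {B : ℝ} (hB : ∀ x ∈ s, |φ x| ≤ B) : IntegrableOn φ s μ :=
  IntegrableOn.of_bound hs.measure_lt_top hφ.aestronglyMeasurable B
    ((ae_restrict_iff' hs.isClosed.measurableSet).2 (.of_forall hB))

variable {K : ℕ} {p : X → Fin K → ℝ} {c₂ : ℝ}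

theorem IsCompact.integrableOn_sq_sum_mul (hs : IsCompact s) (hpm : ∀ k, Measurable (p · k))
    (hp : ∀ x ∈ s, eNorm (p x) ≤ c₂) (v : Fin K → ℝ) :
    IntegrableOn (fun x => (∑ j, v j * p x j) ^ 2) s μ :=
  hs.integrableOn_of_abs_le (by fun_prop) (B := (∑ k, v k ^ 2) * c₂ ^ 2) fun x hx => by
    rw [abs_of_nonneg (sq_nonneg _)]
    exact (Finset.sum_mul_sq_le_sq_mul_sq _ _ _).trans (mul_le_mul_of_nonneg_left
      (sum_sq_le_sq_of_eNorm_le (hp x hx)) (Finset.sum_nonneg fun k _ => sq_nonneg _))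

theorem IsCompact.integrableOn_mul_mul (hs : IsCompact s) (hpm : ∀ k, Measurable (p · k))
    (hp : ∀ x ∈ s, eNorm (p x) ≤ c₂) {w : X → ℝ} (hwm : Measurable w) {B : ℝ}
    (hw : ∀ x ∈ s, |w x| ≤ B) (k l : Fin K) :
    IntegrableOn (fun x => p x k * p x l * w x) s μ :=
  hs.integrableOn_of_abs_le (by fun_prop) (B := c₂ * c₂ * B) fun x hx => by
    have hc₂ : 0 ≤ c₂ := (Real.sqrt_nonneg _).trans (hp x hx)
    rw [abs_mul, abs_mul]
    gcongr
    exacts [(abs_le_eNorm _ k).trans (hp x hx), (abs_le_eNorm _ l).trans (hp x hx), hw x hx]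

end Compact

section Cells

variable {E ι : Type*} {Δ : Finset (Set E)} {p : E → ι → ℝ}

open Classical in
def supportCells (Δ : Finset (Set E)) (p : E → ι → ℝ) (k : ι) : Finset (Set E) :=
  Δ.filter fun δ => ¬ ∀ x ∈ δ, p x k = 0

open Classical in
def activeIndices [Fintype ι] (p : E → ι → ℝ) (δ : Set E) : Finset ι :=
  Finset.univ.filter fun k => ¬ ∀ x ∈ δ, p x k = 0

theorem mem_supportCells {k : ι} {δ : Set E} :
    δ ∈ supportCells Δ p k ↔ δ ∈ Δ ∧ ¬ ∀ x ∈ δ, p x k = 0 := by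
  simp [supportCells]

theorem mem_activeIndices [Fintype ι] {k : ι} {δ : Set E} :
    k ∈ activeIndices p δ ↔ ¬ ∀ x ∈ δ, p x k = 0 := by
  simp [activeIndices]

theorem supportCells_subset {k : ι} : supportCells Δ p k ⊆ Δ := fun _ hδ =>
  (mem_supportCells.1 hδ).1

theorem sUnion_eq_biUnion_supportCells (k : ι) :
    ⋃₀ {δ | δ ∈ Δ ∧ ¬ ∀ x ∈ δ, p x k = 0} = ⋃ δ ∈ supportCells Δ p k, δ := by
  ext x
  simp [mem_supportCells, and_assoc]

theorem card_supportCells_eq_ncard (k : ι) :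
    (supportCells Δ p k).card = {δ | δ ∈ Δ ∧ ¬ ∀ x ∈ δ, p x k = 0}.ncard := by
  rw [← Set.ncard_coe_finset]
  congr 1
  ext δ
  exact mem_supportCells

theorem sum_sum_supportCells [Fintype ι] {M : Type*} [AddCommMonoid M] (F : ι → Set E → M) :
    ∑ k, ∑ δ ∈ supportCells Δ p k, F k δ = ∑ δ ∈ Δ, ∑ k ∈ activeIndices p δ, F k δ :=
  Finset.sum_comm' fun k δ => by simp [mem_supportCells, mem_activeIndices, and_comm]

theorem card_activeIndices_le [Fintype ι] {M : ℕ}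
    (hM : ∀ k, {k' | ¬ ∀ x ∈ ⋃₀ {δ | δ ∈ Δ ∧ ¬ ∀ x ∈ δ, p x k = 0}, p x k' = 0}.ncard ≤ M)
    {δ : Set E} (hδ : δ ∈ Δ) : (activeIndices p δ).card ≤ M := by
  obtain hempty | ⟨k, hk⟩ := (activeIndices p δ).eq_empty_or_nonempty
  · simp [hempty]
  refine le_trans ?_ (hM k)
  rw [← Set.ncard_coe_finset]
  refine Set.ncard_le_ncard fun k' hk' hzero => mem_activeIndices.1 hk' fun x hx => hzero x ?_
  exact ⟨δ, ⟨hδ, mem_activeIndices.1 hk⟩, hx⟩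

theorem sum_mul_eq_sum_activeIndices [Fintype ι] (v : ι → ℝ) {δ : Set E} {x : E} (hx : x ∈ δ) :
    ∑ j, v j * p x j = ∑ j ∈ activeIndices p δ, v j * p x j := by
  refine (Finset.sum_subset (Finset.subset_univ _) fun j _ hj => ?_).symm
  rw [mem_activeIndices, not_not] at hj
  rw [hj x hx, mul_zero]

theorem sq_sum_mul_le [Fintype ι] (v : ι → ℝ) {δ : Set E} {x : E} (hx : x ∈ δ) :
    (∑ j, v j * p x j) ^ 2 ≤ (∑ k ∈ activeIndices p δ, v k ^ 2) * ∑ j, p x j ^ 2 := by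
  rw [sum_mul_eq_sum_activeIndices v hx]
  refine (Finset.sum_mul_sq_le_sq_mul_sq _ _ _).trans ?_
  exact mul_le_mul_of_nonneg_left (Finset.sum_le_sum_of_subset_of_nonneg (Finset.subset_univ _)
    fun j _ _ => sq_nonneg (p x j)) (Finset.sum_nonneg fun k _ => sq_nonneg (v k))

end Cells

section CellIntegrals

variable {E ι : Type*} [MeasurableSpace E] {μ : Measure E} {Δ : Finset (Set E)}

theorem integral_biUnion_cells (hΔm : ∀ δ ∈ Δ, MeasurableSet δ)
    (hdisj : ∀ δ ∈ Δ, ∀ δ' ∈ Δ, δ ≠ δ' → Disjoint δ δ') {s : Finset (Set E)} (hs : s ⊆ Δ)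
    {G : E → ℝ} (hG : ∀ δ ∈ Δ, IntegrableOn G δ μ) :
    ∫ x in ⋃ δ ∈ s, δ, G x ∂μ = ∑ δ ∈ s, ∫ x in δ, G x ∂μ :=
  integral_biUnion_finset s (fun δ hδ => hΔm δ (hs hδ))
    (fun δ hδ δ' hδ' hne => hdisj δ (hs hδ) δ' (hs hδ') hne) (fun δ hδ => hG δ (hs hδ))

theorem sum_integral_sUnion_le [Fintype ι] {p : E → ι → ℝ} {M : ℕ}
    (hΔm : ∀ δ ∈ Δ, MeasurableSet δ) (hdisj : ∀ δ ∈ Δ, ∀ δ' ∈ Δ, δ ≠ δ' → Disjoint δ δ')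
    (hM : ∀ k, {k' | ¬ ∀ x ∈ ⋃₀ {δ | δ ∈ Δ ∧ ¬ ∀ x ∈ δ, p x k = 0}, p x k' = 0}.ncard ≤ M)
    {G : E → ℝ} (hG : 0 ≤ G) (hGi : ∀ δ ∈ Δ, IntegrableOn G δ μ) :
    ∑ k, ∫ x in ⋃₀ {δ | δ ∈ Δ ∧ ¬ ∀ x ∈ δ, p x k = 0}, G x ∂μ
      ≤ M * ∑ δ ∈ Δ, ∫ x in δ, G x ∂μ := by
  calc ∑ k, ∫ x in ⋃₀ {δ | δ ∈ Δ ∧ ¬ ∀ x ∈ δ, p x k = 0}, G x ∂μ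
      = ∑ k, ∑ δ ∈ supportCells Δ p k, ∫ x in δ, G x ∂μ := by
        refine Finset.sum_congr rfl fun k _ => ?_
        rw [sUnion_eq_biUnion_supportCells,
          integral_biUnion_cells hΔm hdisj supportCells_subset hGi]
    _ = ∑ δ ∈ Δ, (activeIndices p δ).card * ∫ x in δ, G x ∂μ := by
        simp only [sum_sum_supportCells, Finset.sum_const, nsmul_eq_mul]
    _ ≤ ∑ δ ∈ Δ, M * ∫ x in δ, G x ∂μ :=
        Finset.sum_le_sum fun δ hδ => mul_le_mul_of_nonneg_right
          (Nat.cast_le.2 (card_activeIndices_le hM hδ)) (integral_nonneg hG)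
    _ = M * ∑ δ ∈ Δ, ∫ x in δ, G x ∂μ := (Finset.mul_sum _ _ _).symm

theorem sum_integral_sq_le [Fintype ι] {p : E → ι → ℝ} {M : ℕ} {B V : ℝ} (hB : 0 ≤ B) (hV : 0 ≤ V)
    (hM : ∀ k, {δ | δ ∈ Δ ∧ ¬ ∀ x ∈ δ, p x k = 0}.ncard ≤ M)
    (hp : ∀ δ ∈ Δ, ∀ x ∈ δ, ∑ j, p x j ^ 2 ≤ B) (hfin : ∀ δ ∈ Δ, μ δ < ∞)
    (hvol : ∀ δ ∈ Δ, μ.real δ ≤ V) (v : ι → ℝ) :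
    ∑ δ ∈ Δ, ∫ x in δ, (∑ j, v j * p x j) ^ 2 ∂μ ≤ M * B * V * ∑ k, v k ^ 2 := by
  have hcell : ∀ δ ∈ Δ, ∫ x in δ, (∑ j, v j * p x j) ^ 2 ∂μ
      ≤ ∑ k ∈ activeIndices p δ, v k ^ 2 * (B * V) := by
    intro δ hδ
    have hv : 0 ≤ ∑ k ∈ activeIndices p δ, v k ^ 2 := Finset.sum_nonneg fun k _ => sq_nonneg _
    have hbound : ∀ x ∈ δ, ‖(∑ j, v j * p x j) ^ 2‖ ≤ (∑ k ∈ activeIndices p δ, v k ^ 2) * B :=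
      fun x hx => by
        rw [Real.norm_of_nonneg (sq_nonneg _)]
        exact (sq_sum_mul_le v hx).trans (mul_le_mul_of_nonneg_left (hp δ hδ x hx) hv)
    calc ∫ x in δ, (∑ j, v j * p x j) ^ 2 ∂μ
        ≤ (∑ k ∈ activeIndices p δ, v k ^ 2) * B * μ.real δ :=
          (le_abs_self _).trans (norm_setIntegral_le_of_norm_le_const (hfin δ hδ) hbound)
      _ ≤ (∑ k ∈ activeIndices p δ, v k ^ 2) * B * V :=
          mul_le_mul_of_nonneg_left (hvol δ hδ) (mul_nonneg hv hB)
      _ = ∑ k ∈ activeIndices p δ, v k ^ 2 * (B * V) := by rw [mul_assoc, Finset.sum_mul]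
  calc ∑ δ ∈ Δ, ∫ x in δ, (∑ j, v j * p x j) ^ 2 ∂μ
      ≤ ∑ δ ∈ Δ, ∑ k ∈ activeIndices p δ, v k ^ 2 * (B * V) := Finset.sum_le_sum hcell
    _ = ∑ k, (supportCells Δ p k).card * (v k ^ 2 * (B * V)) := by
        simp only [← sum_sum_supportCells, Finset.sum_const, nsmul_eq_mul]
    _ ≤ ∑ k, M * (v k ^ 2 * (B * V)) :=
        Finset.sum_le_sum fun k _ => mul_le_mul_of_nonneg_right
          (Nat.cast_le.2 ((card_supportCells_eq_ncard k).trans_le (hM k)))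
          (by positivity)
    _ = M * B * V * ∑ k, v k ^ 2 := by
        rw [Finset.mul_sum]; exact Finset.sum_congr rfl fun k _ => by ring

theorem mul_sum_sq_le_sum_integral [Fintype ι] {p : E → ι → ℝ} {M : ℕ} {c t : ℝ}
    (hΔm : ∀ δ ∈ Δ, MeasurableSet δ) (hdisj : ∀ δ ∈ Δ, ∀ δ' ∈ Δ, δ ≠ δ' → Disjoint δ δ')
    (hM : ∀ k, {k' | ¬ ∀ x ∈ ⋃₀ {δ | δ ∈ Δ ∧ ¬ ∀ x ∈ δ, p x k = 0}, p x k' = 0}.ncard ≤ M)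
    (hloc : ∀ k (a : ι → ℝ), c * a k ^ 2 * t ≤
      ∫ x in ⋃₀ {δ | δ ∈ Δ ∧ ¬ ∀ x ∈ δ, p x k = 0}, (∑ j, a j * p x j) ^ 2 ∂μ)
    (v : ι → ℝ) (hvi : ∀ δ ∈ Δ, IntegrableOn (fun x => (∑ j, v j * p x j) ^ 2) δ μ) :
    c * (∑ k, v k ^ 2) * t ≤ M * ∑ δ ∈ Δ, ∫ x in δ, (∑ j, v j * p x j) ^ 2 ∂μ :=
  calc c * (∑ k, v k ^ 2) * t = ∑ k, c * v k ^ 2 * t := by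
        rw [Finset.mul_sum, Finset.sum_mul]
    _ ≤ ∑ k, ∫ x in ⋃₀ {δ | δ ∈ Δ ∧ ¬ ∀ x ∈ δ, p x k = 0}, (∑ j, v j * p x j) ^ 2 ∂μ :=
        Finset.sum_le_sum fun k _ => hloc k v
    _ ≤ M * ∑ δ ∈ Δ, ∫ x in δ, (∑ j, v j * p x j) ^ 2 ∂μ :=
        sum_integral_sUnion_le hΔm hdisj hM (fun x => sq_nonneg _) hvi

end CellIntegrals

theorem IsOpenPolyhedron.convex {d : ℕ} {s : Set (Euc d)} (hs : IsOpenPolyhedron s) :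
    Convex ℝ s := by
  obtain ⟨N, a, b, rfl⟩ := hs
  rw [Set.ofPred_forall]
  exact convex_iInter fun i => convex_halfSpace_lt (innerₛₗ ℝ (a i)).isLinear (b i)

theorem IsOpenPolyhedron.isOpen {d : ℕ} {s : Set (Euc d)} (hs : IsOpenPolyhedron s) :
    IsOpen s := by
  obtain ⟨N, a, b, rfl⟩ := hs
  rw [Set.ofPred_forall]
  exact isOpen_iInter_of_finite fun i => isOpen_lt (innerSL ℝ (a i)).continuous continuous_const

section AddHaar

variable {E : Type*} [NormedAddCommGroup E] [NormedSpace ℝ E] [MeasurableSpace E] [BorelSpace E]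
  [FiniteDimensional ℝ E] (μ : Measure E) [μ.IsAddHaarMeasure]

theorem ae_eq_biUnion_of_closure_cover {X : Set E} {Δ : Finset (Set E)}
    (hconv : ∀ δ ∈ Δ, Convex ℝ δ) (hsub : ∀ δ ∈ Δ, δ ⊆ X) (hcover : (⋃ δ ∈ Δ, closure δ) = X) :
    X =ᵐ[μ] ⋃ δ ∈ Δ, δ := by
  have hgap : X \ ⋃ δ ∈ Δ, δ ⊆ ⋃ δ ∈ Δ, frontier δ := by
    rintro x ⟨hxX, hxΔ⟩
    rw [← hcover, Set.mem_iUnion₂] at hxX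
    obtain ⟨δ, hδ, hxδ⟩ := hxX
    exact Set.mem_iUnion₂.2 ⟨δ, hδ, hxδ, fun hx => hxΔ (Set.mem_iUnion₂.2
      ⟨δ, hδ, interior_subset hx⟩)⟩
  refine (ae_eq_set.2 ⟨measure_mono_null hgap ?_, ?_⟩)
  · exact (measure_biUnion_null_iff Δ.countable_toSet).2 fun δ hδ => (hconv δ hδ).addHaar_frontier μ
  · rw [Set.sdiff_eq_empty.2 (Set.iUnion₂_subset hsub), measure_empty]

theorem measureReal_le_of_diam_le {s : Set E} (hs : Bornology.IsBounded s) {r : ℝ} (hr : 0 ≤ r)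
    (hdiam : diam s ≤ r) : μ.real s ≤ r ^ Module.finrank ℝ E * μ.real (ball 0 1) := by
  obtain rfl | ⟨z, hz⟩ := s.eq_empty_or_nonempty
  · simp only [measureReal_empty]; positivity
  rw [← Measure.addHaar_real_closedBall μ z hr]
  exact measureReal_mono (fun x hx => (dist_le_diam_of_mem hs hx hz).trans hdiam)
    measure_closedBall_lt_top.ne

end AddHaar

section Partition

variable {d K : ℕ} {𝒳 : Set (Euc d)} {Δ : Finset (Set (Euc d))}

theorem integral_eq_sum_cells (hpoly : ∀ δ ∈ Δ, IsOpenPolyhedron δ) (hsub : ∀ δ ∈ Δ, δ ⊆ 𝒳)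
    (hdisj : ∀ δ ∈ Δ, ∀ δ' ∈ Δ, δ ≠ δ' → Disjoint δ δ') (hcover : (⋃ δ ∈ Δ, closure δ) = 𝒳)
    {G : Euc d → ℝ} (hG : IntegrableOn G 𝒳) :
    ∫ x in 𝒳, G x = ∑ δ ∈ Δ, ∫ x in δ, G x := by
  rw [setIntegral_congr_set (ae_eq_biUnion_of_closure_cover volume
      (fun δ hδ => (hpoly δ hδ).convex) hsub hcover),
    integral_biUnion_cells (fun δ hδ => (hpoly δ hδ).isOpen.measurableSet) hdisj subset_rfl
      fun δ hδ => hG.mono_set (hsub δ hδ)]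

theorem integral_sq_sum_mul_bounds {p : Euc d → Fin K → ℝ} {M : ℕ} {h c₀ c₂ : ℝ}
    (h𝒳 : IsCompact 𝒳) (hpoly : ∀ δ ∈ Δ, IsOpenPolyhedron δ) (hsub : ∀ δ ∈ Δ, δ ⊆ 𝒳)
    (hdisj : ∀ δ ∈ Δ, ∀ δ' ∈ Δ, δ ≠ δ' → Disjoint δ δ') (hcover : (⋃ δ ∈ Δ, closure δ) = 𝒳)
    (hh : 0 ≤ h) (hdiam : ∀ δ ∈ Δ, diam δ ≤ h) (hpm : ∀ k, Measurable (p · k))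
    (hcells : ∀ k, {δ | δ ∈ Δ ∧ ¬ ∀ x ∈ δ, p x k = 0}.ncard ≤ M)
    (hindices : ∀ k, {k' | ¬ ∀ x ∈ ⋃₀ {δ | δ ∈ Δ ∧ ¬ ∀ x ∈ δ, p x k = 0}, p x k' = 0}.ncard ≤ M)
    (hloc : ∀ k (a : Fin K → ℝ), c₀ * a k ^ 2 * h ^ d ≤
      ∫ x in ⋃₀ {δ | δ ∈ Δ ∧ ¬ ∀ x ∈ δ, p x k = 0}, (∑ j, a j * p x j) ^ 2)
    (hp : ∀ x ∈ 𝒳, eNorm (p x) ≤ c₂) (v : Fin K → ℝ) :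
    c₀ * (∑ k, v k ^ 2) * h ^ d ≤ M * ∫ x in 𝒳, (∑ j, v j * p x j) ^ 2 ∧
      ∫ x in 𝒳, (∑ j, v j * p x j) ^ 2
        ≤ M * c₂ ^ 2 * (h ^ d * volume.real (ball (0 : Euc d) 1)) * ∑ k, v k ^ 2 := by
  have hvi := h𝒳.integrableOn_sq_sum_mul (μ := volume) hpm hp v
  rw [integral_eq_sum_cells hpoly hsub hdisj hcover hvi]
  have hΔm : ∀ δ ∈ Δ, MeasurableSet δ := fun δ hδ => (hpoly δ hδ).isOpen.measurableSet
  refine ⟨mul_sum_sq_le_sum_integral hΔm hdisj hindices hloc v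
    fun δ hδ => hvi.mono_set (hsub δ hδ), sum_integral_sq_le (sq_nonneg c₂) (by positivity) hcells
    (fun δ hδ x hx => sum_sq_le_sq_of_eNorm_le (hp x (hsub δ hδ hx)))
    (fun δ hδ => (measure_mono (hsub δ hδ)).trans_lt h𝒳.measure_lt_top) (fun δ hδ => ?_) v⟩
  simpa only [finrank_euclideanSpace_fin] using
    measureReal_le_of_diam_le volume (h𝒳.isBounded.subset (hsub δ hδ)) hh (hdiam δ hδ)

end Partition

theorem statement0_general (d : ℕ)
    (ρqu Cqu f₁ f₂ c₀ c₂ : ℝ) (Mb : ℕ)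
    (hf₁ : 0 < f₁) (hc₀ : 0 < c₀) :
    ∃ c C : ℝ, 0 < c ∧ c ≤ C ∧
      ∀ (𝒳 : Set (Euc d)) (f : Euc d → ℝ) (Δ : Finset (Set (Euc d))) (h : ℝ)
        (K : ℕ) (p : Euc d → Fin K → ℝ),
        -- domain and density
        IsCompact 𝒳 → IsConnected 𝒳 →
        Measurable f → ContinuousOn f 𝒳 →
        (∀ x ∈ 𝒳, f₁ ≤ f x ∧ f x ≤ f₂) →
        (∫ x in 𝒳, f x) = 1 →
        -- quasi-uniform partition with maximal mesh h
        0 < h →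
        (∀ δ ∈ Δ, IsOpenPolyhedron δ) →
        (∀ δ ∈ Δ, δ ⊆ 𝒳) →
        (∀ δ ∈ Δ, ∀ δ' ∈ Δ, δ ≠ δ' → Disjoint δ δ') →
        (⋃ δ ∈ Δ, closure δ) = 𝒳 →
        (∀ δ ∈ Δ, ∃ z₁ r₁ z₂ r₂, 0 < r₁ ∧ Metric.closedBall z₁ r₁ ⊆ δ ∧
            δ ⊆ Metric.closedBall z₂ r₂ ∧ ρqu * r₂ ≤ r₁) →
        (∀ δ ∈ Δ, ∀ δ' ∈ Δ, Metric.diam δ ≤ Cqu * Metric.diam δ') →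
        (∀ δ ∈ Δ, Metric.diam δ ≤ h) →
        (∃ δ ∈ Δ, Metric.diam δ = h) →
        -- local basis assumptions (a), (b), (c)
        1 ≤ K →
        (∀ k : Fin K, Measurable (fun x => p x k)) →
        (∀ k : Fin K,
          IsConnected (⋃₀ {δ : Set (Euc d) | δ ∈ Δ ∧ ¬ ∀ x ∈ δ, p x k = 0}) ∧
          Set.ncard {δ : Set (Euc d) | δ ∈ Δ ∧ ¬ ∀ x ∈ δ, p x k = 0} ≤ Mb ∧
          Set.ncard {k' : Fin K |
            ¬ ∀ x ∈ ⋃₀ {δ : Set (Euc d) | δ ∈ Δ ∧ ¬ ∀ x ∈ δ, p x k = 0},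
              p x k' = 0} ≤ Mb) →
        (∀ (k : Fin K) (a : Fin K → ℝ),
          c₀ * a k ^ 2 * h ^ d ≤
            ∫ x in ⋃₀ {δ : Set (Euc d) | δ ∈ Δ ∧ ¬ ∀ x ∈ δ, p x k = 0},
              (∑ j, a j * p x j) ^ 2) →
        (∀ δ ∈ Δ, ∀ x ∈ closure δ, eNorm (p x) ≤ c₂) →
        -- conclusion: eigenvalue bounds for the population Gram matrix
        (let Qm : Matrix (Fin K) (Fin K) ℝ := fun k l => ∫ x in 𝒳, p x k * p x l * f x
        c * h ^ d ≤ lamMin Qm ∧ lamMin Qm ≤ lamMax Qm ∧ lamMax Qm ≤ C * h ^ d) := by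
  set ω := volume.real (ball (0 : Euc d) 1)
  -- `Mb + 1` rather than `Mb`: with `Mb = 0` the quotient would be the junk value `0`.
  refine ⟨f₁ * c₀ / (Mb + 1), max (f₁ * c₀ / (Mb + 1)) (f₂ * Mb * c₂ ^ 2 * ω), by positivity,
    le_max_left _ _, ?_⟩
  intro 𝒳 f Δ h K p h𝒳 h𝒳conn hfm _ hf _ hh hpoly hsub hdisj hcover _ _ hdiam _ hK hpm hA hB hc₂ Qm
  have hp : ∀ x ∈ 𝒳, eNorm (p x) ≤ c₂ := fun x hx => by
    obtain ⟨δ, hδ, hxδ⟩ := Set.mem_iUnion₂.1 (hcover.symm ▸ hx : x ∈ ⋃ δ ∈ Δ, closure δ)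
    exact hc₂ δ hδ x hxδ
  have hf₂ : ∀ x ∈ 𝒳, |f x| ≤ f₂ := fun x hx => by
    rw [abs_of_pos (hf₁.trans_le (hf x hx).1)]; exact (hf x hx).2
  obtain ⟨x₀, hx₀⟩ := h𝒳conn.nonempty
  have hf₂0 : 0 ≤ f₂ := (abs_nonneg _).trans (hf₂ x₀ hx₀)
  have : Nonempty (Fin K) := ⟨⟨0, hK⟩⟩
  refine lamMin_lamMax_bounds fun v hv => ?_
  rw [quadForm_integral_eq (h𝒳.integrableOn_mul_mul (μ := volume) hpm hp hfm hf₂) v]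
  obtain ⟨hQlow, hQup⟩ := setIntegral_mul_mem_Icc h𝒳.isClosed.measurableSet
    (fun x _ => sq_nonneg _) (h𝒳.integrableOn_sq_sum_mul (μ := volume) hpm hp v)
    hfm.aestronglyMeasurable hf
  obtain ⟨hlow, hup⟩ := integral_sq_sum_mul_bounds h𝒳 hpoly hsub hdisj hcover hh.le hdiam hpm
    (fun k => (hA k).2.1) (fun k => (hA k).2.2) hB hp v
  rw [hv, mul_one] at hlow hup
  have hI0 : 0 ≤ ∫ x in 𝒳, (∑ j, v j * p x j) ^ 2 := integral_nonneg fun x => sq_nonneg _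
  constructor
  · rw [div_mul_eq_mul_div, div_le_iff₀ (by positivity)]
    nlinarith
  · nlinarith [mul_le_mul_of_nonneg_left hup hf₂0, mul_le_mul_of_nonneg_right
      (le_max_right (f₁ * c₀ / (Mb + 1)) (f₂ * Mb * c₂ ^ 2 * ω)) (pow_nonneg hh.le d)]

/-- Lemma SA-1, population part.
Under the quasi-uniform partition and local basis assumptions, there are constants
`0 < c ≤ C`, depending only on the constants of the assumptions (not on `K`, `h`,
or the particular partition), such that
`c·h^d ≤ λ_min(Q_m) ≤ λ_max(Q_m) ≤ C·h^d` for the population Gram matrix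
`Q_m = ∫_𝒳 p(x)p(x)' f(x) dx`. -/
theorem statement0 (d : ℕ) (hd : 1 ≤ d)
    (ρqu Cqu f₁ f₂ c₀ c₂ : ℝ) (Mb : ℕ)
    (hρqu : 0 < ρqu) (hf₁ : 0 < f₁) (hc₀ : 0 < c₀) :
    ∃ c C : ℝ, 0 < c ∧ c ≤ C ∧
      ∀ (𝒳 : Set (Euc d)) (f : Euc d → ℝ) (Δ : Finset (Set (Euc d))) (h : ℝ)
        (K : ℕ) (p : Euc d → Fin K → ℝ),
        -- domain and density
        IsCompact 𝒳 → IsConnected 𝒳 →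
        Measurable f → ContinuousOn f 𝒳 →
        (∀ x ∈ 𝒳, f₁ ≤ f x ∧ f x ≤ f₂) →
        (∫ x in 𝒳, f x) = 1 →
        -- quasi-uniform partition with maximal mesh h
        0 < h →
        (∀ δ ∈ Δ, IsOpenPolyhedron δ) →
        (∀ δ ∈ Δ, δ ⊆ 𝒳) →
        (∀ δ ∈ Δ, ∀ δ' ∈ Δ, δ ≠ δ' → Disjoint δ δ') →
        (⋃ δ ∈ Δ, closure δ) = 𝒳 →
        (∀ δ ∈ Δ, ∃ z₁ r₁ z₂ r₂, 0 < r₁ ∧ Metric.closedBall z₁ r₁ ⊆ δ ∧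
            δ ⊆ Metric.closedBall z₂ r₂ ∧ ρqu * r₂ ≤ r₁) →
        (∀ δ ∈ Δ, ∀ δ' ∈ Δ, Metric.diam δ ≤ Cqu * Metric.diam δ') →
        (∀ δ ∈ Δ, Metric.diam δ ≤ h) →
        (∃ δ ∈ Δ, Metric.diam δ = h) →
        -- local basis assumptions (a), (b), (c)
        1 ≤ K →
        (∀ k : Fin K, Measurable (fun x => p x k)) →
        (∀ k : Fin K,
          IsConnected (⋃₀ {δ : Set (Euc d) | δ ∈ Δ ∧ ¬ ∀ x ∈ δ, p x k = 0}) ∧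
          Set.ncard {δ : Set (Euc d) | δ ∈ Δ ∧ ¬ ∀ x ∈ δ, p x k = 0} ≤ Mb ∧
          Set.ncard {k' : Fin K |
            ¬ ∀ x ∈ ⋃₀ {δ : Set (Euc d) | δ ∈ Δ ∧ ¬ ∀ x ∈ δ, p x k = 0},
              p x k' = 0} ≤ Mb) →
        (∀ (k : Fin K) (a : Fin K → ℝ),
          c₀ * a k ^ 2 * h ^ d ≤
            ∫ x in ⋃₀ {δ : Set (Euc d) | δ ∈ Δ ∧ ¬ ∀ x ∈ δ, p x k = 0},
              (∑ j, a j * p x j) ^ 2) →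
        (∀ δ ∈ Δ, ∀ x ∈ closure δ, eNorm (p x) ≤ c₂) →
        -- conclusion: eigenvalue bounds for the population Gram matrix
        (let Qm : Matrix (Fin K) (Fin K) ℝ := fun k l => ∫ x in 𝒳, p x k * p x l * f x
        c * h ^ d ≤ lamMin Qm ∧ lamMin Qm ≤ lamMax Qm ∧ lamMax Qm ≤ C * h ^ d) :=
  statement0_general d ρqu Cqu f₁ f₂ c₀ c₂ Mb hf₁ hc₀
end
end

section
/- Let L ≥ 1 be an integer and 0 < a ≤ b. Let K ≥ 1 and let A ∈ ℝ^{K×K} be a symmetric matrix with A_{ij} = 0 whenever |i − j| > L, and suppose a·‖v‖² ≤ v'Av ≤ b·‖v‖² for all v ∈ ℝ^K. Then A is invertible, and there exist constants C > 0 and θ ∈ (0,1), depending only on a, b and L (not on K), such that |(A^{-1})_{ij}| ≤ C·θ^{|i−j|} for all i, j; consequently ‖A^{-1}‖_∞ ≤ C' for a constant C' depending only on a, b and L, where ‖·‖_∞ is the maximum absolute row-sum norm. (Exponential off-diagonal decay of inverses of banded symmetric positive definite matrices, as established in the proof of Lemma SA-1.) -/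
open MeasureTheory Filter Metric Matrix
open scoped BigOperators ENNReal

noncomputable section

/-!
For `c = 2 / (a + b)` the symmetric matrix `B = 1 - c • A` has spectral norm at most
`q = (b - a) / (a + b) < 1`, and for every `N`
`A⁻¹ = c • (1 + B + ⋯ + B ^ (N - 1)) + B ^ N * A⁻¹`.
Since `B ^ n` has bandwidth `n * L`, the `(i, j)` entry of the finite sum vanishes as soon as
`(N - 1) * L < |i - j|`, whence `|A⁻¹ i j| ≤ ‖B‖ ^ N * ‖A⁻¹‖ ≤ q ^ N / a`. Taking
`N = ⌈|i - j| / L⌉` gives decay at any rate `θ < 1` with `q ≤ θ ^ L`, and summing the two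
geometric tails along a row bounds `‖A⁻¹‖_∞`.
-/

open Finset
open scoped RealInnerProductSpace

namespace Matrix

def IsBanded {R : Type*} [Zero R] {K : ℕ} (A : Matrix (Fin K) (Fin K) R) (L : ℕ) : Prop :=
  ∀ i j : Fin K, (L : ℤ) < |(i : ℤ) - (j : ℤ)| → A i j = 0

namespace IsBanded

variable {R : Type*} {K : ℕ} {A B : Matrix (Fin K) (Fin K) R} {L M : ℕ}

lemma mono [Zero R] (hA : A.IsBanded L) (hLM : L ≤ M) : A.IsBanded M :=
  fun i j hij => hA i j (lt_of_le_of_lt (by exact_mod_cast hLM) hij)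

lemma one [Zero R] [One R] : (1 : Matrix (Fin K) (Fin K) R).IsBanded 0 := fun i j hij =>
  one_apply_ne (by rintro rfl; simp at hij)

lemma sub [AddGroup R] (hA : A.IsBanded L) (hB : B.IsBanded L) : (A - B).IsBanded L :=
  fun i j hij => by simp [hA i j hij, hB i j hij]

lemma smul [Zero R] [SMulZeroClass R R] (c : R) (hA : A.IsBanded L) : (c • A).IsBanded L :=
  fun i j hij => by simp [hA i j hij]

lemma mul [NonUnitalNonAssocSemiring R] (hA : A.IsBanded L) (hB : B.IsBanded M) :
    (A * B).IsBanded (L + M) := fun i j hij => by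
  rw [mul_apply]
  refine sum_eq_zero fun k _ => ?_
  by_cases hik : (L : ℤ) < |(i : ℤ) - (k : ℤ)|
  · rw [hA i k hik, zero_mul]
  · have htri := abs_sub_le (i : ℤ) k j
    rw [hB k j (by push_cast at hij; linarith), mul_zero]

lemma pow [Semiring R] (hA : A.IsBanded L) (n : ℕ) : (A ^ n).IsBanded (n * L) := by
  induction n with
  | zero => simpa using one
  | succ n ih => simpa [pow_succ, add_mul] using ih.mul hA

end IsBanded

end Matrix

lemma eq_geom_sum_mul_add_pow_mul {R : Type*} [Ring R] {x y z : R} (h : (1 - x) * y = z)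
    (N : ℕ) : y = (∑ n ∈ range N, x ^ n) * z + x ^ N * y := by
  rw [← h, ← mul_assoc, geom_sum_mul_neg, sub_mul, one_mul, sub_add_cancel]

lemma Matrix.inv_apply_eq_pow_mul_inv_apply {R : Type*} [CommRing R] {K L : ℕ}
    {A : Matrix (Fin K) (Fin K) R} (hA : IsUnit A.det) (hband : A.IsBanded L) (c : R)
    {i j : Fin K} {N : ℕ} (hN : ∀ n < N, ((n * L : ℕ) : ℤ) < |(i : ℤ) - (j : ℤ)|) :
    A⁻¹ i j = ((1 - c • A) ^ N * A⁻¹) i j := by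
  have hB : (1 - c • A).IsBanded L := (IsBanded.one.mono L.zero_le).sub (hband.smul c)
  have hrel : (1 - (1 - c • A)) * A⁻¹ = c • 1 := by
    rw [sub_sub_cancel, smul_mul_assoc, mul_nonsing_inv _ hA]
  conv_lhs => rw [eq_geom_sum_mul_add_pow_mul hrel N]
  rw [add_apply, Matrix.mul_smul, mul_one, smul_apply, sum_apply,
    sum_eq_zero fun n hn => (hB.pow n) i j (hN n (mem_range.mp hn)), smul_zero, zero_add]

namespace ContinuousLinearMap

variable {E : Type*} [NormedAddCommGroup E] [InnerProductSpace ℝ E] {T : E →L[ℝ] E}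

lemma norm_le_of_abs_inner_self_le (hT : (T : E →ₗ[ℝ] E).IsSymmetric) {q : ℝ} (hq : 0 ≤ q)
    (h : ∀ x, |⟪T x, x⟫| ≤ q * ‖x‖ ^ 2) : ‖T‖ ≤ q := by
  rw [T.norm_eq_iSup_rayleighQuotient hT]
  refine ciSup_le fun x => ?_
  rcases eq_or_ne x 0 with rfl | hx
  · simpa using hq
  · rw [rayleighQuotient, reApplyInnerSelf_apply, RCLike.re_to_real, abs_div, abs_sq,
      div_le_iff₀ (by positivity)]
    exact h x

lemma mul_norm_le_norm_apply {a : ℝ} (h : ∀ x, a * ‖x‖ ^ 2 ≤ ⟪T x, x⟫) (x : E) :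
    a * ‖x‖ ≤ ‖T x‖ := by
  rcases eq_or_ne x 0 with rfl | hx
  · simp
  · have hx' : 0 < ‖x‖ := norm_pos_iff.mpr hx
    refine le_of_mul_le_mul_right ?_ hx'
    calc a * ‖x‖ * ‖x‖ = a * ‖x‖ ^ 2 := by ring
      _ ≤ ⟪T x, x⟫ := h x
      _ ≤ ‖T x‖ * ‖x‖ := real_inner_le_norm _ _

/-- `2 / (a + b)` is the optimal relaxation parameter of Richardson's iteration for a
symmetric operator with numerical range in `[a, b]`. -/
lemma norm_one_sub_smul_le (hT : (T : E →ₗ[ℝ] E).IsSymmetric) {a b : ℝ} (ha : 0 < a)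
    (hab : a ≤ b) (h : ∀ x, a * ‖x‖ ^ 2 ≤ ⟪T x, x⟫ ∧ ⟪T x, x⟫ ≤ b * ‖x‖ ^ 2) :
    ‖1 - (2 / (a + b)) • T‖ ≤ (b - a) / (a + b) := by
  set c := 2 / (a + b)
  set q := (b - a) / (a + b)
  have hc : 0 < c := div_pos two_pos (by linarith)
  have hab₀ : a + b ≠ 0 := by linarith
  have hca : c * a = 1 - q := by simp only [c, q]; field_simp; ring
  have hcb : c * b = 1 + q := by simp only [c, q]; field_simp; ring
  have hsymm : ((1 - c • T : E →L[ℝ] E) : E →ₗ[ℝ] E).IsSymmetric := by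
    simpa using LinearMap.IsSymmetric.one.sub (hT.smul (conj_trivial c))
  refine norm_le_of_abs_inner_self_le hsymm (div_nonneg (by linarith) (by linarith)) fun x => ?_
  have e : ⟪(1 - c • T) x, x⟫ = ‖x‖ ^ 2 - c * ⟪T x, x⟫ := by
    simp [inner_sub_left, inner_smul_left]
  obtain ⟨h₁, h₂⟩ := h x
  have h₁' := mul_le_mul_of_nonneg_left h₁ hc.le
  have h₂' := mul_le_mul_of_nonneg_left h₂ hc.le
  rw [← mul_assoc, hca] at h₁'
  rw [← mul_assoc, hcb] at h₂'
  rw [e, abs_le]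
  constructor <;> linarith

end ContinuousLinearMap

lemma norm_pow_mul_le {R : Type*} [SeminormedRing R] (x y : R) (N : ℕ) :
    ‖x ^ N * y‖ ≤ ‖x‖ ^ N * ‖y‖ := by
  induction N with
  | zero => simp
  | succ N ih =>
    calc ‖x ^ (N + 1) * y‖ = ‖x * (x ^ N * y)‖ := by rw [pow_succ', mul_assoc]
      _ ≤ ‖x‖ * (‖x‖ ^ N * ‖y‖) := (norm_mul_le _ _).trans (by gcongr)
      _ = ‖x‖ ^ (N + 1) * ‖y‖ := by ring

namespace Matrix

open scoped Matrix.Norms.L2Operator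

variable {n : Type*} [Fintype n] [DecidableEq n]

lemma norm_apply_le_l2_opNorm {𝕜 : Type*} [RCLike 𝕜] {m : Type*} [Fintype m]
    (M : Matrix m n 𝕜) (i : m) (j : n) : ‖M i j‖ ≤ ‖M‖ := by
  have h := M.l2_opNorm_mulVec (EuclideanSpace.single j 1)
  rw [PiLp.norm_single, norm_one, mul_one] at h
  refine le_trans (le_of_eq ?_) ((PiLp.norm_apply_le _ i).trans h)
  simp [mulVec_single]

lemma quadForm_ofLp (A : Matrix n n ℝ) (x : EuclideanSpace ℝ n) :
    quadForm A x.ofLp = ⟪toEuclideanCLM (𝕜 := ℝ) A x, x⟫ := by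
  rw [real_inner_comm, inner_toEuclideanCLM]
  simp only [quadForm, dotProduct, mulVec, mul_sum, mul_assoc]

section Coercive

variable {A : Matrix n n ℝ} {a : ℝ}

lemma isUnit_det_of_coercive (ha : 0 < a)
    (h : ∀ x, a * ‖x‖ ^ 2 ≤ ⟪toEuclideanCLM (𝕜 := ℝ) A x, x⟫) : IsUnit A.det := by
  rw [isUnit_iff_ne_zero]
  intro hdet
  obtain ⟨v, hv, hAv⟩ := exists_mulVec_eq_zero_iff.mpr hdet
  have hbound := (toEuclideanCLM (𝕜 := ℝ) A).mul_norm_le_norm_apply h (WithLp.toLp 2 v)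
  simp only [toEuclideanCLM_toLp, hAv, WithLp.toLp_zero, norm_zero] at hbound
  exact hv (by simpa using (mul_nonpos_iff_pos_imp_nonpos.mp hbound).1 ha)

lemma l2_opNorm_inv_le (ha : 0 < a)
    (h : ∀ x, a * ‖x‖ ^ 2 ≤ ⟪toEuclideanCLM (𝕜 := ℝ) A x, x⟫) : ‖A⁻¹‖ ≤ a⁻¹ := by
  have hT := (toEuclideanCLM (𝕜 := ℝ) A).mul_norm_le_norm_apply h
  have hAA : toEuclideanCLM (𝕜 := ℝ) A * toEuclideanCLM (𝕜 := ℝ) A⁻¹ = 1 := by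
    rw [← map_mul, mul_nonsing_inv _ (isUnit_det_of_coercive ha h), map_one]
  rw [cstar_norm_def]
  refine ContinuousLinearMap.opNorm_le_bound _ (inv_nonneg.mpr ha.le) fun y => ?_
  have hy := hT (toEuclideanCLM (𝕜 := ℝ) A⁻¹ y)
  rw [show toEuclideanCLM (𝕜 := ℝ) A (toEuclideanCLM (𝕜 := ℝ) A⁻¹ y) = y from
    DFunLike.congr_fun hAA y] at hy
  rw [inv_mul_eq_div, le_div_iff₀ ha, mul_comm]
  exact hy

end Coercive

theorem abs_inv_apply_le_of_isBanded {K L : ℕ} {A : Matrix (Fin K) (Fin K) ℝ} (hA : A.IsSymm)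
    (hband : A.IsBanded L) {a b : ℝ} (ha : 0 < a) (hab : a ≤ b)
    (h : ∀ x, a * ‖x‖ ^ 2 ≤ ⟪toEuclideanCLM (𝕜 := ℝ) A x, x⟫ ∧
      ⟪toEuclideanCLM (𝕜 := ℝ) A x, x⟫ ≤ b * ‖x‖ ^ 2)
    {i j : Fin K} {N : ℕ} (hN : ∀ n < N, ((n * L : ℕ) : ℤ) < |(i : ℤ) - (j : ℤ)|) :
    |A⁻¹ i j| ≤ ((b - a) / (a + b)) ^ N * a⁻¹ := by
  set c := 2 / (a + b)
  have hsymm : ((toEuclideanCLM (𝕜 := ℝ) A :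
      EuclideanSpace ℝ (Fin K) →L[ℝ] EuclideanSpace ℝ (Fin K)) :
      EuclideanSpace ℝ (Fin K) →ₗ[ℝ] EuclideanSpace ℝ (Fin K)).IsSymmetric := by
    rwa [coe_toEuclideanCLM_eq_toEuclideanLin, isSymmetric_toEuclideanLin_iff,
      isHermitian_iff_isSymm]
  have hB : ‖1 - c • A‖ ≤ (b - a) / (a + b) := by
    rw [cstar_norm_def, map_sub, map_one, map_smul]
    exact ContinuousLinearMap.norm_one_sub_smul_le hsymm ha hab h
  have hdet := isUnit_det_of_coercive ha fun x => (h x).1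
  rw [inv_apply_eq_pow_mul_inv_apply hdet hband c hN, ← Real.norm_eq_abs]
  calc ‖((1 - c • A) ^ N * A⁻¹) i j‖ ≤ ‖(1 - c • A) ^ N * A⁻¹‖ := norm_apply_le_l2_opNorm _ i j
    _ ≤ ‖1 - c • A‖ ^ N * ‖A⁻¹‖ := norm_pow_mul_le _ _ N
    _ ≤ ((b - a) / (a + b)) ^ N * a⁻¹ := by
      gcongr
      exacts [pow_nonneg (div_nonneg (by linarith) (by linarith)) N,
        l2_opNorm_inv_le ha fun x => (h x).1]

end Matrix

lemma exists_pow_ge_of_lt_one {q : ℝ} (hq : q < 1) {L : ℕ} (hL : L ≠ 0) :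
    ∃ θ : ℝ, 0 < θ ∧ θ < 1 ∧ q ≤ θ ^ L := by
  set t := max q (1 / 2)
  have ht0 : 0 < t := lt_max_of_lt_right (by norm_num)
  refine ⟨t ^ (L : ℝ)⁻¹, by positivity,
    Real.rpow_lt_one ht0.le (max_lt hq (by norm_num)) (by positivity), ?_⟩
  rw [← Real.rpow_natCast, ← Real.rpow_mul ht0.le, inv_mul_cancel₀ (by exact_mod_cast hL),
    Real.rpow_one]
  exact le_max_left _ _

lemma mul_lt_of_lt_ceilDiv {L m n : ℕ} (hL : 0 < L) (hn : n < m ⌈/⌉ L) : n * L < m := by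
  by_contra! h
  exact hn.not_ge ((ceilDiv_le_iff_le_mul hL).2 (by linarith [mul_comm n L]))

lemma pow_ceilDiv_le {q θ : ℝ} (hq : 0 ≤ q) (hθ0 : 0 ≤ θ) (hθ1 : θ ≤ 1) {L : ℕ} (hL : 0 < L)
    (hqθ : q ≤ θ ^ L) (m : ℕ) : q ^ (m ⌈/⌉ L) ≤ θ ^ m :=
  calc q ^ (m ⌈/⌉ L) ≤ (θ ^ L) ^ (m ⌈/⌉ L) := by gcongr
    _ = θ ^ (L * (m ⌈/⌉ L)) := (pow_mul _ _ _).symm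
    _ ≤ θ ^ m := pow_le_pow_of_le_one hθ0 hθ1 (le_smul_ceilDiv hL)

lemma hasSum_pow_natAbs {θ : ℝ} (h0 : 0 ≤ θ) (h1 : θ < 1) :
    HasSum (fun d : ℤ => θ ^ d.natAbs) ((1 + θ) / (1 - θ)) := by
  have hg := hasSum_geometric_of_lt_one h0 h1
  have hsum := HasSum.of_nat_of_neg (f := fun d : ℤ => θ ^ d.natAbs) (by simpa using hg)
    (by simpa using hg)
  rw [Int.natAbs_zero, pow_zero, ← two_mul, ← div_eq_mul_inv,
    div_sub_one (sub_ne_zero.mpr h1.ne')] at hsum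
  rwa [show (2 : ℝ) - (1 - θ) = 1 + θ by ring] at hsum

lemma sum_pow_natAbs_le {ι : Type*} [Fintype ι] {g : ι → ℤ} (hg : Function.Injective g)
    {θ : ℝ} (h0 : 0 ≤ θ) (h1 : θ < 1) :
    ∑ l, θ ^ (g l).natAbs ≤ (1 + θ) / (1 - θ) := by
  rw [← sum_image (g := g) (f := fun d => θ ^ d.natAbs) (fun x _ y _ h => hg h)]
  exact sum_le_hasSum _ (fun _ _ => by positivity) (hasSum_pow_natAbs h0 h1)

lemma rowSumNorm_le_of_abs_apply_le {K : ℕ} [NeZero K] {M : Matrix (Fin K) (Fin K) ℝ}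
    {C θ : ℝ} (hC : 0 ≤ C) (h0 : 0 ≤ θ) (h1 : θ < 1)
    (hM : ∀ i j : Fin K, |M i j| ≤ C * θ ^ ((i : ℤ) - (j : ℤ)).natAbs) :
    rowSumNorm M ≤ C * ((1 + θ) / (1 - θ)) := by
  refine ciSup_le fun i => ?_
  have hinj : Function.Injective fun l : Fin K => (i : ℤ) - (l : ℤ) :=
    sub_right_injective.comp (Nat.cast_injective.comp Fin.val_injective)
  calc ∑ l, |M i l| ≤ ∑ l : Fin K, C * θ ^ ((i : ℤ) - (l : ℤ)).natAbs :=
        sum_le_sum fun l _ => hM i l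
    _ = C * ∑ l : Fin K, θ ^ ((i : ℤ) - (l : ℤ)).natAbs := (mul_sum _ _ _).symm
    _ ≤ C * ((1 + θ) / (1 - θ)) := by gcongr; exact sum_pow_natAbs_le hinj h0 h1

/-- exponential off-diagonal decay of inverses of banded symmetric
positive definite matrices, as in the proof of Lemma SA-1.
If `A` is symmetric, banded with bandwidth `L`, and `a‖v‖² ≤ v'Av ≤ b‖v‖²`, then `A`
is invertible and `|(A⁻¹)_{ij}| ≤ C θ^{|i−j|}` with `C, θ, C'` depending only on
`a`, `b`, `L` (not on `K`); consequently `‖A⁻¹‖_∞ ≤ C'`. -/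
theorem statement3 (L : ℕ) (hL : 1 ≤ L) (a b : ℝ) (ha : 0 < a) (hab : a ≤ b) :
    ∃ C θ C' : ℝ, 0 < C ∧ 0 < θ ∧ θ < 1 ∧ 0 < C' ∧
      ∀ (K : ℕ), 1 ≤ K → ∀ A : Matrix (Fin K) (Fin K) ℝ,
        A.IsSymm →
        (∀ i j : Fin K, (L : ℤ) < |(i : ℤ) - (j : ℤ)| → A i j = 0) →
        (∀ v : Fin K → ℝ,
          a * (∑ k, v k ^ 2) ≤ quadForm A v ∧ quadForm A v ≤ b * (∑ k, v k ^ 2)) →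
        IsUnit A.det ∧
        (∀ i j : Fin K, |A⁻¹ i j| ≤ C * θ ^ ((i : ℤ) - (j : ℤ)).natAbs) ∧
        rowSumNorm A⁻¹ ≤ C' := by
  set q := (b - a) / (a + b)
  have hq0 : 0 ≤ q := div_nonneg (by linarith) (by linarith)
  have hq1 : q < 1 := (div_lt_one (by linarith)).mpr (by linarith)
  obtain ⟨θ, hθ0, hθ1, hqθ⟩ := exists_pow_ge_of_lt_one hq1 (by omega : L ≠ 0)
  refine ⟨a⁻¹, θ, a⁻¹ * ((1 + θ) / (1 - θ)), inv_pos.mpr ha, hθ0, hθ1,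
    mul_pos (inv_pos.mpr ha) (div_pos (by linarith) (by linarith)), ?_⟩
  intro K hK A hA hband hquad
  have hT (x : EuclideanSpace ℝ (Fin K)) : a * ‖x‖ ^ 2 ≤ ⟪toEuclideanCLM (𝕜 := ℝ) A x, x⟫ ∧
      ⟪toEuclideanCLM (𝕜 := ℝ) A x, x⟫ ≤ b * ‖x‖ ^ 2 := by
    simpa only [EuclideanSpace.real_norm_sq_eq, Matrix.quadForm_ofLp] using hquad x.ofLp
  have hentry (i j : Fin K) : |A⁻¹ i j| ≤ a⁻¹ * θ ^ ((i : ℤ) - (j : ℤ)).natAbs := by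
    set m := ((i : ℤ) - (j : ℤ)).natAbs
    have hN (n : ℕ) (hn : n < m ⌈/⌉ L) : ((n * L : ℕ) : ℤ) < |(i : ℤ) - (j : ℤ)| := by
      rw [← Int.natCast_natAbs, Nat.cast_lt]
      exact mul_lt_of_lt_ceilDiv hL hn
    calc |A⁻¹ i j| ≤ q ^ (m ⌈/⌉ L) * a⁻¹ :=
          Matrix.abs_inv_apply_le_of_isBanded hA hband ha hab hT hN
      _ ≤ θ ^ m * a⁻¹ := by gcongr; exact pow_ceilDiv_le hq0 hθ0.le hθ1.le hL hqθ m
      _ = a⁻¹ * θ ^ m := mul_comm _ _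
  have : NeZero K := ⟨by omega⟩
  exact ⟨Matrix.isUnit_det_of_coercive ha fun x => (hT x).1, hentry,
    rowSumNorm_le_of_abs_apply_le (inv_nonneg.mpr ha.le) hθ0.le hθ1 hentry⟩
end
end

section
/- Let d ≥ 1, m ≥ 1 be integers and r ∈ (0,1]. There exist constants 0 < c ≤ C depending only on d, m and r such that the following holds: for every h > 0, every convex set δ ⊂ ℝ^d, and points t ∈ δ and t' with the containments B(t', r·h) ⊆ δ ⊆ B(t, h), the Gram matrix G, indexed by multi-indices α, β with [α] ≤ m−1 and [β] ≤ m−1 and defined by G_{αβ} := ∫_δ ((x−t)/h)^{α+β} dx, satisfies c·h^d·‖a‖² ≤ a'Ga ≤ C·h^d·‖a‖² for all real vectors a. (Gram-matrix eigenvalue bounds for scaled monomials on quasi-uniform cells, the content of Lemma SA-7(1) verifying the local-basis assumption for generalized regressograms on general partitions.) -/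
open MeasureTheory Filter Metric Matrix
open scoped BigOperators ENNReal

noncomputable section

open scoped Classical

/-! Writing `P(x) = ∑ a_α ((x - t)/h)^α`, the quadratic form `a'Ga` is `∫_δ P²`. After the
substitution `x = t' + h y` (resp. `x = t + h y`) the integrals of `P²` over `B(t', r h) ⊆ δ`
and over `B(t, h) ⊇ δ` become `h^d ∫_{B(0,ρ)} p(y + z)²`, where `p(y) = ∑ a_α y^α`,
`ρ = r` (resp. `1`) and `‖z‖ ≤ 1`. This is a continuous function of `(a, z)`, homogeneous of
degree two in `a` and positive for `a ≠ 0` (a polynomial vanishing on a ball is zero), so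
compactness of the unit sphere times the unit ball bounds it above and below by multiples
of `‖a‖²`. -/

theorem exists_mul_norm_sq_le_and_le_of_homogeneous {E Z : Type*} [NormedAddCommGroup E]
    [NormedSpace ℝ E] [FiniteDimensional ℝ E] [TopologicalSpace Z] {K : Set Z}
    (hK : IsCompact K) {Q : E → Z → ℝ} (hQ : Continuous (Function.uncurry Q))
    (hsmul : ∀ (s : ℝ) a z, Q (s • a) z = s ^ 2 * Q a z)
    (hpos : ∀ a ≠ 0, ∀ z ∈ K, 0 < Q a z) :
    ∃ c C : ℝ, 0 < c ∧ ∀ a, ∀ z ∈ K, c * ‖a‖ ^ 2 ≤ Q a z ∧ Q a z ≤ C * ‖a‖ ^ 2 := by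
  have hT : IsCompact (sphere (0 : E) 1 ×ˢ K) := (isCompact_sphere 0 1).prod hK
  obtain ⟨c, hc, hcQ⟩ := hT.exists_forall_le' hQ.continuousOn (a := 0) fun p hp =>
    hpos p.1 (ne_zero_of_mem_unit_sphere ⟨p.1, hp.1⟩) p.2 hp.2
  obtain ⟨C, hCQ⟩ := hT.bddAbove_image hQ.continuousOn
  have hnormalize : ∀ a z, Q a z = ‖a‖ ^ 2 * Q (‖a‖⁻¹ • a) z := by
    intro a z
    rcases eq_or_ne a 0 with rfl | ha
    · simpa using hsmul 0 0 z
    · rw [← hsmul, smul_inv_smul₀ (norm_ne_zero_iff.2 ha)]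
  refine ⟨c, C, hc, fun a z hz => ?_⟩
  rcases eq_or_ne a 0 with rfl | ha
  · simp [show Q 0 z = 0 by simpa using hsmul 0 0 z]
  have hmem : (‖a‖⁻¹ • a, z) ∈ sphere (0 : E) 1 ×ˢ K :=
    ⟨by simp [norm_smul, ha], hz⟩
  rw [hnormalize a z, mul_comm c, mul_comm C]
  exact ⟨by gcongr; exact hcQ _ hmem, by gcongr; exact hCQ ⟨_, hmem, rfl⟩⟩

theorem setIntegral_closedBall_eq_pow_mul {E : Type*} [NormedAddCommGroup E] [NormedSpace ℝ E]
    [MeasurableSpace E] [BorelSpace E] [FiniteDimensional ℝ E] (μ : Measure E) [μ.IsAddHaarMeasure]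
    (g : E → ℝ) (c : E) {ρ h : ℝ} (hρ : 0 ≤ ρ) (hh : 0 < h) :
    ∫ x in closedBall c (ρ * h), g x ∂μ =
      h ^ Module.finrank ℝ E * ∫ y in closedBall 0 ρ, g (c + h • y) ∂μ := by
  have htranslate := (measurePreserving_add_left μ c).setIntegral_preimage_emb
    (measurableEmbedding_addLeft c) g (closedBall c (ρ * h))
  simp only [preimage_add_closedBall, sub_self] at htranslate
  rw [Measure.setIntegral_comp_smul_of_pos μ (fun y => g (c + y)) _ hh, smul_closedBall _ _ hρ,
    smul_zero, Real.norm_of_nonneg hh.le, mul_comm h, htranslate, smul_eq_mul,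
    mul_inv_cancel_left₀ (by positivity)]

theorem norm_inv_smul_sub_le_one {E : Type*} [NormedAddCommGroup E] [NormedSpace ℝ E]
    {x t : E} {h : ℝ} (hh : 0 < h) (hx : x ∈ closedBall t h) : ‖h⁻¹ • (x - t)‖ ≤ 1 := by
  rw [norm_smul, Real.norm_of_nonneg (inv_nonneg.2 hh.le), ← dist_eq_norm]
  exact inv_mul_le_one_of_le₀ hx hh.le

theorem sum_sum_mul_integral_mul_mul_eq_integral_sq {X ι : Type*} [MeasurableSpace X]
    {μ : Measure X} (s : Finset ι) (a : ι → ℝ) (f : ι → X → ℝ)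
    (hf : ∀ α β, Integrable (fun x => f α x * f β x) μ) :
    ∑ α ∈ s, ∑ β ∈ s, a α * (∫ x, f α x * f β x ∂μ) * a β =
      ∫ x, (∑ α ∈ s, a α * f α x) ^ 2 ∂μ := by
  have hint (α β : ι) : Integrable (fun x => a α * f α x * (a β * f β x)) μ := by
    simpa [mul_mul_mul_comm] using (hf α β).const_mul (a α * a β)
  simp_rw [sq, Finset.sum_mul_sum]
  rw [integral_finsetSum _ fun α _ => integrable_finsetSum _ fun β _ => hint α β]
  refine Finset.sum_congr rfl fun α _ => ?_
  rw [integral_finsetSum _ fun β _ => hint α β]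
  refine Finset.sum_congr rfl fun β _ => ?_
  rw [← integral_const_mul, ← integral_mul_const]
  congr 1 with x
  ring

section MonomialSum

variable {d : ℕ} (S : Finset (Fin d → ℕ))

def monomialSum (b : S → ℝ) (x : Euc d) : ℝ := ∑ α : S, b α * ∏ i, x i ^ (α : Fin d → ℕ) i

theorem monomialSum_smul (s : ℝ) (b : S → ℝ) (x : Euc d) :
    monomialSum S (s • b) x = s * monomialSum S b x := by
  simp only [monomialSum, Finset.mul_sum, Pi.smul_apply, smul_eq_mul, mul_assoc]

@[fun_prop]
theorem Continuous.monomialSum {X : Type*} [TopologicalSpace X] {b : X → S → ℝ} {x : X → Euc d}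
    (hb : Continuous b) (hx : Continuous x) : Continuous fun p => monomialSum S (b p) (x p) := by
  unfold _root_.monomialSum; fun_prop

theorem analyticOnNhd_monomialSum (b : S → ℝ) :
    AnalyticOnNhd ℝ (monomialSum S b) Set.univ :=
  Finset.analyticOnNhd_fun_sum _ fun _ _ => analyticOnNhd_const.mul <|
    Finset.analyticOnNhd_fun_prod _ fun i _ x _ =>
      ((EuclideanSpace.proj (𝕜 := ℝ) i).analyticAt x).pow _

theorem eval_sum_monomial_eq_monomialSum (b : S → ℝ) (x : Euc d) :
    MvPolynomial.eval x (∑ α : S, MvPolynomial.monomial (Finsupp.equivFunOnFinite.symm α.1) (b α))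
      = monomialSum S b x := by
  simp [monomialSum, MvPolynomial.eval_monomial, Finsupp.prod_pow]

theorem eq_zero_of_monomialSum_eq_zero {b : S → ℝ} (hb : ∀ x, monomialSum S b x = 0) :
    b = 0 := by
  set P := ∑ α : S, MvPolynomial.monomial (Finsupp.equivFunOnFinite.symm α.1) (b α)
  have hP : P = 0 := MvPolynomial.funext fun x => by
    simpa [P] using (eval_sum_monomial_eq_monomialSum S b (WithLp.toLp 2 x)).trans (hb _)
  funext α
  have := congrArg (MvPolynomial.coeff (Finsupp.equivFunOnFinite.symm α.1)) hP
  rwa [MvPolynomial.coeff_zero, MvPolynomial.coeff_sum, Finset.sum_eq_single α (fun β _ hβ => ?_)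
    (by simp), MvPolynomial.coeff_monomial, if_pos rfl] at this
  rw [MvPolynomial.coeff_monomial, if_neg (fun h => hβ (Subtype.ext ?_))]
  exact Finsupp.equivFunOnFinite.symm.injective h

theorem exists_mem_ball_monomialSum_ne_zero {b : S → ℝ} (hb : b ≠ 0) (z : Euc d) {ρ : ℝ}
    (hρ : 0 < ρ) : ∃ x ∈ ball z ρ, monomialSum S b x ≠ 0 := by
  by_contra! h
  refine hb (eq_zero_of_monomialSum_eq_zero S fun x => ?_)
  have := (analyticOnNhd_monomialSum S b).eqOn_zero_of_preconnected_of_eventuallyEq_zero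
    isPreconnected_univ (Set.mem_univ z) (Filter.eventually_of_mem (ball_mem_nhds z hρ) h)
  exact this (Set.mem_univ x)

theorem integral_sq_monomialSum_pos {b : S → ℝ} (hb : b ≠ 0) (z : Euc d) {ρ : ℝ} (hρ : 0 < ρ) :
    0 < ∫ y in closedBall (0 : Euc d) ρ, monomialSum S b (y + z) ^ 2 := by
  have hcont : Continuous fun y => monomialSum S b (y + z) := by fun_prop
  obtain ⟨x, hx, hne⟩ := exists_mem_ball_monomialSum_ne_zero S hb z hρ
  rw [setIntegral_pos_iff_support_of_nonneg_ae (.of_forall fun _ => sq_nonneg _)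
    ((hcont.pow 2).continuousOn.integrableOn_compact (isCompact_closedBall _ _))]
  have hopen : IsOpen ((Function.support fun y => monomialSum S b (y + z) ^ 2) ∩ ball 0 ρ) :=
    (hcont.pow 2).isOpen_support.inter isOpen_ball
  refine (hopen.measure_pos volume ⟨x - z, ?_, ?_⟩).trans_le
    (measure_mono (Set.inter_subset_inter_right _ ball_subset_closedBall))
  · simpa using hne
  · simpa [dist_eq_norm] using hx

theorem exists_bounds_integral_sq_monomialSum {ρ : ℝ} (hρ : 0 < ρ) :
    ∃ c C : ℝ, 0 < c ∧ ∀ (b : S → ℝ) (z : Euc d), ‖z‖ ≤ 1 →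
      c * ∑ α, b α ^ 2 ≤ ∫ y in closedBall (0 : Euc d) ρ, monomialSum S b (y + z) ^ 2 ∧
      ∫ y in closedBall (0 : Euc d) ρ, monomialSum S b (y + z) ^ 2 ≤ C * ∑ α, b α ^ 2 := by
  let Q (b : EuclideanSpace ℝ S) (z : Euc d) : ℝ :=
    ∫ y in closedBall (0 : Euc d) ρ, monomialSum S b.ofLp (y + z) ^ 2
  have hQ : Continuous (Function.uncurry Q) :=
    continuous_parametric_integral_of_continuous (by fun_prop) (isCompact_closedBall _ _)
  have hsmul (s : ℝ) b z : Q (s • b) z = s ^ 2 * Q b z := by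
    simp only [Q, WithLp.ofLp_smul, monomialSum_smul, mul_pow, integral_const_mul]
  have hpos (b : EuclideanSpace ℝ S) (hb : b ≠ 0) z (_ : z ∈ closedBall (0 : Euc d) 1) :
      0 < Q b z :=
    integral_sq_monomialSum_pos S (by simpa using hb) z hρ
  obtain ⟨c, C, hc, hbounds⟩ := exists_mul_norm_sq_le_and_le_of_homogeneous
    (isCompact_closedBall (0 : Euc d) 1) hQ hsmul hpos
  refine ⟨c, C, hc, fun b z hz => ?_⟩
  have hnorm : ‖WithLp.toLp 2 b‖ ^ 2 = ∑ α, b α ^ 2 := by simp [EuclideanSpace.norm_sq_eq]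
  simpa [Q, hnorm] using hbounds (WithLp.toLp 2 b) z (mem_closedBall_zero_iff.2 hz)

theorem setIntegral_sq_monomialSum_closedBall (b : S → ℝ) (t z : Euc d) {ρ h : ℝ} (hρ : 0 ≤ ρ)
    (hh : 0 < h) :
    ∫ x in closedBall z (ρ * h), monomialSum S b (h⁻¹ • (x - t)) ^ 2 =
      h ^ d * ∫ y in closedBall 0 ρ, monomialSum S b (y + h⁻¹ • (z - t)) ^ 2 := by
  rw [setIntegral_closedBall_eq_pow_mul volume _ z hρ hh, finrank_euclideanSpace_fin]
  congr 2 with y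
  simp only [add_sub_right_comm, smul_add, inv_smul_smul₀ hh.ne', add_comm]

theorem sum_sum_mul_gram_mul_eq_setIntegral_sq_monomialSum (a : (Fin d → ℕ) → ℝ)
    {δ : Set (Euc d)} (hδ : Bornology.IsBounded δ) (t : Euc d) (h : ℝ) :
    ∑ α ∈ S, ∑ β ∈ S, a α * (∫ x in δ, ∏ i, ((x i - t i) / h) ^ (α i + β i)) * a β =
      ∫ x in δ, monomialSum S (fun α => a α) (h⁻¹ • (x - t)) ^ 2 := by
  obtain ⟨R, hR⟩ := hδ.subset_closedBall t
  simp only [pow_add, Finset.prod_mul_distrib]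
  rw [sum_sum_mul_integral_mul_mul_eq_integral_sq]
  · congr 1 with x
    rw [monomialSum, Finset.sum_coe_sort S fun α => a α * ∏ i, (h⁻¹ • (x - t)) i ^ α i]
    simp [div_eq_inv_mul]
  · exact fun α β => ((by fun_prop : Continuous fun x : Euc d => _).continuousOn
      |>.integrableOn_compact (isCompact_closedBall t R)).mono_set hR

end MonomialSum

theorem statement15_general (d m : ℕ)
    (r : ℝ) (hr0 : 0 < r) :
    ∃ c C : ℝ, 0 < c ∧ c ≤ C ∧
      ∀ (h : ℝ), 0 < h → ∀ (δ : Set (Euc d)), Convex ℝ δ →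
      ∀ t : Euc d, t ∈ δ → ∀ t' : Euc d,
        Metric.closedBall t' (r * h) ⊆ δ → δ ⊆ Metric.closedBall t h →
      ∀ a : (Fin d → ℕ) → ℝ,
        (let S : Finset (Fin d → ℕ) :=
          (Finset.Iic (fun _ : Fin d => m - 1)).filter (fun α => mOrder α ≤ m - 1)
        let G : (Fin d → ℕ) → (Fin d → ℕ) → ℝ := fun α β =>
          ∫ x in δ, ∏ i, ((x i - t i) / h) ^ (α i + β i)
        c * h ^ d * (∑ α ∈ S, a α ^ 2) ≤ ∑ α ∈ S, ∑ β ∈ S, a α * G α β * a β ∧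
        ∑ α ∈ S, ∑ β ∈ S, a α * G α β * a β ≤ C * h ^ d * (∑ α ∈ S, a α ^ 2)) := by
  set S : Finset (Fin d → ℕ) :=
    (Finset.Iic (fun _ : Fin d => m - 1)).filter (fun α => mOrder α ≤ m - 1)
  obtain ⟨c, _, hc, hlower⟩ := exists_bounds_integral_sq_monomialSum S hr0
  obtain ⟨_, C, _, hupper⟩ := exists_bounds_integral_sq_monomialSum S one_pos
  refine ⟨c, max c C, hc, le_max_left _ _, fun h hh δ _ t _ t' hin hout a => ?_⟩
  set b : S → ℝ := fun α => a α
  have hPint : IntegrableOn (fun x => monomialSum S b (h⁻¹ • (x - t)) ^ 2) (closedBall t h) :=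
    (by fun_prop : Continuous _).continuousOn.integrableOn_compact (isCompact_closedBall _ _)
  have ht' : t' ∈ closedBall t h := hout (hin (mem_closedBall_self (by positivity)))
  intro S' G
  simp only [S', G, sum_sum_mul_gram_mul_eq_setIntegral_sq_monomialSum S a
    (isBounded_closedBall.subset hout), ← Finset.sum_coe_sort S fun α => a α ^ 2]
  constructor
  · calc c * h ^ d * ∑ α, b α ^ 2 = h ^ d * (c * ∑ α, b α ^ 2) := by ring
      _ ≤ h ^ d * ∫ y in closedBall 0 r, monomialSum S b (y + h⁻¹ • (t' - t)) ^ 2 := by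
        gcongr; exact (hlower b _ (norm_inv_smul_sub_le_one hh ht')).1
      _ = ∫ x in closedBall t' (r * h), monomialSum S b (h⁻¹ • (x - t)) ^ 2 :=
        (setIntegral_sq_monomialSum_closedBall S b t t' hr0.le hh).symm
      _ ≤ ∫ x in δ, monomialSum S b (h⁻¹ • (x - t)) ^ 2 :=
        setIntegral_mono_set (hPint.mono_set hout) (.of_forall fun _ => sq_nonneg _)
          (.of_forall hin)
  · calc ∫ x in δ, monomialSum S b (h⁻¹ • (x - t)) ^ 2
          ≤ ∫ x in closedBall t (1 * h), monomialSum S b (h⁻¹ • (x - t)) ^ 2 := by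
          rw [one_mul]
          exact setIntegral_mono_set hPint (.of_forall fun _ => sq_nonneg _) (.of_forall hout)
      _ = h ^ d * ∫ y in closedBall 0 1, monomialSum S b (y + h⁻¹ • (t - t)) ^ 2 :=
        setIntegral_sq_monomialSum_closedBall S b t t zero_le_one hh
      _ ≤ h ^ d * (C * ∑ α, b α ^ 2) := by
        gcongr; exact (hupper b _ (by simp)).2
      _ ≤ max c C * h ^ d * ∑ α, b α ^ 2 := by
        rw [mul_left_comm, ← mul_assoc]; gcongr; exact le_max_right _ _

/-- Lemma SA-7(1): Gram-matrix eigenvalue bounds for scaled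
monomials on quasi-uniform cells. There are constants `0 < c ≤ C` depending only
on `d`, `m`, `r` such that for every `h > 0`, every convex cell `δ` with
`B(t', r·h) ⊆ δ ⊆ B(t, h)` and `t ∈ δ`, the Gram matrix
`G_{αβ} = ∫_δ ((x−t)/h)^{α+β} dx` over multi-indices of order at most `m−1`
satisfies `c·h^d·‖a‖² ≤ a'Ga ≤ C·h^d·‖a‖²`. -/
theorem statement15 (d m : ℕ) (hd : 1 ≤ d) (hm : 1 ≤ m)
    (r : ℝ) (hr0 : 0 < r) (hr1 : r ≤ 1) :
    ∃ c C : ℝ, 0 < c ∧ c ≤ C ∧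
      ∀ (h : ℝ), 0 < h → ∀ (δ : Set (Euc d)), Convex ℝ δ →
      ∀ t : Euc d, t ∈ δ → ∀ t' : Euc d,
        Metric.closedBall t' (r * h) ⊆ δ → δ ⊆ Metric.closedBall t h →
      ∀ a : (Fin d → ℕ) → ℝ,
        (let S : Finset (Fin d → ℕ) :=
          (Finset.Iic (fun _ : Fin d => m - 1)).filter (fun α => mOrder α ≤ m - 1)
        let G : (Fin d → ℕ) → (Fin d → ℕ) → ℝ := fun α β =>
          ∫ x in δ, ∏ i, ((x i - t i) / h) ^ (α i + β i)
        c * h ^ d * (∑ α ∈ S, a α ^ 2) ≤ ∑ α ∈ S, ∑ β ∈ S, a α * G α β * a β ∧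
        ∑ α ∈ S, ∑ β ∈ S, a α * G α β * a β ≤ C * h ^ d * (∑ α ∈ S, a α ^ 2)) :=
  statement15_general d m r hr0
end
end

section
/- Fix integers m ≥ 2 and 1 ≤ ῑ ≤ m−1. For each integer κ ≥ 1, let R(κ) be the real matrix with κ·ῑ rows, indexed by pairs (k, ς) with k ∈ {1,…,κ} and ς ∈ {0,…,ῑ−1}, and (κ+1)·m columns, indexed by pairs (j, l) with j ∈ {1,…,κ+1} and l ∈ {0,…,m−1}, whose only nonzero entries are R(κ)[(k,ς),(k,l)] = P̄_l^{(ς)}(1) and R(κ)[(k,ς),(k+1,l)] = −P̄_l^{(ς)}(−1) for l ∈ {0,…,m−1}, where P̄_l := √((2l+1)/2)·P_l is the normalized Legendre polynomial and P̄_l^{(ς)} its ς-th derivative. Then there exist constants 0 < c ≤ C depending only on m and ῑ (not on κ) such that c ≤ λ_min(R(κ)·R(κ)') ≤ λ_max(R(κ)·R(κ)') ≤ C for every κ ≥ 1. (Lemma 7.1 of the supplement: uniform eigenvalue bounds for the spline continuity-restriction matrix.) -/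
/-!
Blockwise, `v ᵥ* R(κ)` has `j`-th block `a'v_j + b'v_{j-1}`, where `a` and `-b` are the jets of the
`P̄_l` at `1` and `-1`. On generating functions `V(z) = ∑ v_k z^k` this is multiplication by the
symbol `a' + z b'`, so by Parseval on the unit circle `‖v ᵥ* R(κ)‖²` is the circle average of
`‖(a' + z b') V(z)‖²`, independently of `κ`. It therefore suffices to bound the symbol above and
below uniformly on `|z| = 1`, and by compactness this reduces to its injectivity. If
`∑_ς x_ς (a_ς + z b_ς) = 0`, the functional `p ↦ ∑_ς x_ς (p^{(ς)}(1) - z p^{(ς)}(-1))` vanishes on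
`P̄_0, …, P̄_{m-1}`, hence on all polynomials of degree `< m`, and testing it on monomials gives
`x = 0` because `ι < m`.
-/

open MeasureTheory Filter Metric Matrix
open scoped BigOperators ENNReal

noncomputable section

/-- The `l`-th Legendre polynomial, via the Rodrigues formula. -/
noncomputable def legendreP (l : ℕ) : ℝ → ℝ :=
  fun x => (1 / (2 ^ l * (l.factorial : ℝ))) * iteratedDeriv l (fun y => (y ^ 2 - 1) ^ l) x

/-- The normalized Legendre polynomial `P̄_l = √((2l+1)/2)·P_l`. -/
noncomputable def legendreNorm (l : ℕ) : ℝ → ℝ :=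
  fun x => Real.sqrt ((2 * l + 1) / 2) * legendreP l x

open Polynomial

theorem iteratedDeriv_eval_eq {𝕜 : Type*} [NontriviallyNormedField 𝕜] (p : 𝕜[X]) (k : ℕ) :
    iteratedDeriv k (fun x => p.eval x) = fun x => (derivative^[k] p).eval x := by
  induction k with
  | zero => simp
  | succ k ih =>
    ext x
    rw [iteratedDeriv_succ, ih, Function.iterate_succ_apply', Polynomial.deriv]

section IterateDerivative

variable {R : Type*} [Semiring R] [IsAddTorsionFree R]

theorem natDegree_iterate_derivative_eq (p : R[X]) (k : ℕ) :
    (derivative^[k] p).natDegree = p.natDegree - k := by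
  induction k with
  | zero => simp
  | succ k ih => rw [Function.iterate_succ_apply', natDegree_derivative, ih, Nat.sub_sub]

theorem iterate_derivative_ne_zero {p : R[X]} (hp : p ≠ 0) {k : ℕ} (hk : k ≤ p.natDegree) :
    derivative^[k] p ≠ 0 := by
  induction k with
  | zero => exact hp
  | succ k ih =>
    rw [Function.iterate_succ_apply', Ne, derivative_eq_zero, natDegree_iterate_derivative_eq]
    omega

end IterateDerivative

noncomputable def normLegendre (l : ℕ) : ℝ[X] :=
  C (Real.sqrt ((2 * l + 1) / 2) / (2 ^ l * l.factorial)) * derivative^[l] ((X ^ 2 - 1) ^ l)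

theorem legendreNorm_eq_eval (l : ℕ) : legendreNorm l = fun x => (normLegendre l).eval x := by
  ext x
  have hbase : (fun y : ℝ => (y ^ 2 - 1) ^ l) = fun y => (((X : ℝ[X]) ^ 2 - 1) ^ l).eval y := by
    simp
  simp only [legendreNorm, legendreP, hbase, iteratedDeriv_eval_eq, normLegendre, eval_mul, eval_C]
  ring

theorem degree_normLegendre (l : ℕ) : (normLegendre l).degree = l := by
  have hq : ((X : ℝ[X]) ^ 2 - 1) ^ l ≠ 0 := pow_ne_zero _ (X_pow_sub_C_ne_zero two_pos 1)
  have hdeg : (((X : ℝ[X]) ^ 2 - 1) ^ l).natDegree = 2 * l := by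
    rw [natDegree_pow, ← C_1, natDegree_X_pow_sub_C, mul_comm]
  have hc : Real.sqrt ((2 * l + 1) / 2) / (2 ^ l * l.factorial) ≠ 0 := by positivity
  rw [normLegendre, degree_C_mul hc, degree_eq_natDegree (iterate_derivative_ne_zero hq (by omega)),
    natDegree_iterate_derivative_eq, hdeg]
  norm_cast
  omega

noncomputable def normLegendreSeq : Sequence ℝ := ⟨normLegendre, degree_normLegendre⟩

theorem span_normLegendre (m : ℕ) : Submodule.span ℝ (normLegendre '' Set.Iio m) = degreeLT ℝ m :=
  normLegendreSeq.span_degreeLT fun i _ =>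
    (leadingCoeff_ne_zero.mpr (normLegendreSeq.ne_zero i)).isUnit

noncomputable def jumpFunctional {ι : ℕ} (x : Fin ι → ℂ) (z : ℂ) : ℝ[X] →ₗ[ℝ] ℂ where
  toFun p := ∑ ς, x ς * ((derivative^[ς] p).eval 1 - z * (derivative^[ς] p).eval (-1) : ℂ)
  map_add' p q := by
    simp only [iterate_map_add, eval_add, Complex.ofReal_add, ← Finset.sum_add_distrib]
    exact Finset.sum_congr rfl fun _ _ => by ring
  map_smul' r p := by
    simp only [iterate_derivative_smul, eval_smul, smul_eq_mul, Complex.ofReal_mul,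
      RingHom.id_apply, Complex.real_smul, Finset.mul_sum]
    exact Finset.sum_congr rfl fun _ _ => by ring

theorem jumpFunctional_X_pow {ι : ℕ} (x : Fin ι → ℂ) (z : ℂ) (n : ℕ) :
    jumpFunctional x z (X ^ n) =
      ∑ ς : Fin ι, x ς * ((n.descFactorial ς : ℂ) * (1 - z * (-1) ^ (n - ς))) := by
  simp only [jumpFunctional, LinearMap.coe_mk, AddHom.coe_mk]
  refine Finset.sum_congr rfl fun ς _ => ?_
  simp only [iterate_derivative_X_pow_eq_smul, eval_smul, eval_pow, eval_X, one_pow, smul_eq_mul]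
  push_cast
  ring

theorem jumpFunctional_X_pow_eq_single {ι : ℕ} {x : Fin ι → ℂ} {z : ℂ} {n : ℕ} (j : Fin ι)
    (hlow : ∀ ς < j, x ς = 0)
    (hhigh : ∀ ς, j < ς → (n.descFactorial ς : ℂ) * (1 - z * (-1) ^ (n - ς)) = 0) :
    jumpFunctional x z (X ^ n) = x j * ((n.descFactorial j : ℂ) * (1 - z * (-1) ^ (n - j))) := by
  rw [jumpFunctional_X_pow]
  refine Finset.sum_eq_single j (fun ς _ hne => ?_) (by simp)
  rcases lt_or_gt_of_ne hne with h | h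
  · rw [hlow ς h, zero_mul]
  · rw [hhigh ς h, mul_zero]

/-- Once `x_ς = 0` for `ς < j`, `X ^ j` isolates `x_j` when `z ≠ 1`, and `X ^ (j + 1)` does when
`z = 1`; the latter needs `j + 1 < m`. -/
theorem eq_zero_of_jumpFunctional_X_pow {ι m : ℕ} (hιm : ι < m) {x : Fin ι → ℂ} {z : ℂ}
    (h : ∀ n < m, jumpFunctional x z (X ^ n) = 0) : x = 0 := by
  suffices hx : ∀ j (hj : j < ι), x ⟨j, hj⟩ = 0 from funext fun ς => hx ς ς.2
  intro j
  induction j using Nat.strong_induction_on with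
  | _ j ih =>
  intro hj
  have hlow : ∀ ς < (⟨j, hj⟩ : Fin ι), x ς = 0 := fun ς hς => ih ς hς ς.2
  by_cases hz : z = 1
  · have hval := h (j + 1) (by omega)
    rw [jumpFunctional_X_pow_eq_single ⟨j, hj⟩ hlow fun ς hς => ?_] at hval
    · have hd : ((j + 1).descFactorial j : ℂ) ≠ 0 := by
        exact_mod_cast (Nat.descFactorial_pos.mpr (by omega)).ne'
      simpa [hz, hd, Nat.add_sub_cancel_left, two_ne_zero] using hval
    · rcases (show (ς : ℕ) = j + 1 ∨ j + 1 < ς by simp [Fin.lt_def] at hς; omega) with h1 | h1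
      · simp [h1, hz]
      · simp [Nat.descFactorial_eq_zero_iff_lt.mpr h1]
  · have hval := h j (by omega)
    rw [jumpFunctional_X_pow_eq_single ⟨j, hj⟩ hlow fun ς hς => by
      simp [Nat.descFactorial_eq_zero_iff_lt.mpr (Fin.lt_def.mp hς)]] at hval
    have hd : (j.descFactorial j : ℂ) ≠ 0 := by
      exact_mod_cast (Nat.descFactorial_pos.mpr le_rfl).ne'
    simpa [hd, sub_eq_zero, Ne.symm hz] using hval

theorem iteratedDeriv_legendreNorm (k l : ℕ) (t : ℝ) :
    iteratedDeriv k (legendreNorm l) t = (derivative^[k] (normLegendre l)).eval t := by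
  rw [legendreNorm_eq_eval, iteratedDeriv_eval_eq]

noncomputable def legendreJet (m ι : ℕ) (t : ℝ) : Matrix (Fin ι) (Fin m) ℝ :=
  fun ς l => iteratedDeriv ς (legendreNorm l) t

/-- The symbol of `bandMatrix κ a b`, transposed so that it acts on column vectors. -/
def symbol {α β : Type*} (a b : Matrix α β ℝ) (z : ℂ) : Matrix β α ℂ :=
  fun l ς => a ς l + z * b ς l

theorem continuous_symbol {α β : Type*} (a b : Matrix α β ℝ) : Continuous (symbol a b) :=
  continuous_pi fun _ => continuous_pi fun _ => by unfold symbol; fun_prop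

theorem symbol_legendreJet_mulVec_eq_zero {m ι : ℕ} (hιm : ι < m) {z : ℂ} {x : Fin ι → ℂ}
    (hx : symbol (legendreJet m ι 1) (-legendreJet m ι (-1)) z *ᵥ x = 0) : x = 0 := by
  have hker : degreeLT ℝ m ≤ LinearMap.ker (jumpFunctional x z) := by
    rw [← span_normLegendre, Submodule.span_le]
    rintro _ ⟨l, hl, rfl⟩
    have hxl := congrFun hx ⟨l, hl⟩
    simp only [Matrix.mulVec, dotProduct, symbol, legendreJet, Matrix.neg_apply,
      iteratedDeriv_legendreNorm, Pi.zero_apply] at hxl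
    rw [SetLike.mem_coe, LinearMap.mem_ker, ← hxl]
    simp only [jumpFunctional, LinearMap.coe_mk, AddHom.coe_mk]
    refine Finset.sum_congr rfl fun ς _ => ?_
    push_cast
    ring
  refine eq_zero_of_jumpFunctional_X_pow hιm fun n hn => hker ?_
  rw [mem_degreeLT, degree_X_pow]
  exact_mod_cast hn

theorem LinearMap.norm_apply_eq_norm_mul_norm_apply_normalize {𝕜 E F : Type*} [RCLike 𝕜]
    [NormedAddCommGroup E] [NormedSpace 𝕜 E] [NormedAddCommGroup F] [NormedSpace 𝕜 F]
    (T : E →ₗ[𝕜] F) (x : E) : ‖T x‖ = ‖x‖ * ‖T ((‖x‖ : 𝕜)⁻¹ • x)‖ := by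
  rcases eq_or_ne x 0 with rfl | hx
  · simp
  rw [map_smul, norm_smul, norm_inv, RCLike.norm_ofReal, abs_norm, ← mul_assoc,
    mul_inv_cancel₀ (norm_ne_zero_iff.mpr hx), one_mul]

theorem IsCompact.exists_pos_norm_bounds {𝕜 X E F : Type*} [RCLike 𝕜] [TopologicalSpace X]
    [NormedAddCommGroup E] [NormedSpace 𝕜 E] [FiniteDimensional 𝕜 E]
    [NormedAddCommGroup F] [NormedSpace 𝕜 F] {K : Set X} (hK : IsCompact K)
    (T : X → E →ₗ[𝕜] F) (hT : Continuous fun p : X × E => T p.1 p.2)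
    (hinj : ∀ z ∈ K, Function.Injective (T z)) :
    ∃ c C : ℝ, 0 < c ∧ c ≤ C ∧ ∀ z ∈ K, ∀ x, c * ‖x‖ ≤ ‖T z x‖ ∧ ‖T z x‖ ≤ C * ‖x‖ := by
  set S := K ×ˢ Metric.sphere (0 : E) 1
  have hnormalize : ∀ z ∈ K, ∀ x : E, x ≠ 0 → (z, (‖x‖ : 𝕜)⁻¹ • x) ∈ S := fun z hz x hx =>
    ⟨hz, by simpa using norm_smul_inv_norm hx⟩
  rcases S.eq_empty_or_nonempty with hS | hS
  · refine ⟨1, 1, one_pos, le_rfl, fun z hz x => ?_⟩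
    obtain rfl : x = 0 := by
      by_contra hx
      simpa [hS] using hnormalize z hz x hx
    simp
  have : ProperSpace E := FiniteDimensional.proper_rclike 𝕜 E
  have hSc : IsCompact S := hK.prod (isCompact_sphere 0 1)
  have hg : ContinuousOn (fun p : X × E => ‖T p.1 p.2‖) S := hT.norm.continuousOn
  obtain ⟨p₀, hp₀, hmin⟩ := hSc.exists_isMinOn hS hg
  obtain ⟨p₁, hp₁, hmax⟩ := hSc.exists_isMaxOn hS hg
  refine ⟨‖T p₀.1 p₀.2‖, ‖T p₁.1 p₁.2‖, ?_, hmin hp₁, fun z hz x => ?_⟩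
  · have hne : p₀.2 ≠ 0 := ne_zero_of_mem_unit_sphere ⟨p₀.2, hp₀.2⟩
    exact norm_pos_iff.mpr fun h => hne (hinj p₀.1 hp₀.1 (h.trans (map_zero _).symm))
  rcases eq_or_ne x 0 with rfl | hx
  · simp
  rw [(T z).norm_apply_eq_norm_mul_norm_apply_normalize x, mul_comm ‖T p₀.1 p₀.2‖,
    mul_comm ‖T p₁.1 p₁.2‖]
  exact ⟨mul_le_mul_of_nonneg_left (hmin (hnormalize z hz x hx)) (norm_nonneg x),
    mul_le_mul_of_nonneg_left (hmax (hnormalize z hz x hx)) (norm_nonneg x)⟩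

theorem exists_symbol_legendreJet_bounds {m ι : ℕ} (hιm : ι < m) :
    ∃ c C : ℝ, 0 < c ∧ c ≤ C ∧ ∀ z : ℂ, ‖z‖ = 1 → ∀ x : Fin ι → ℂ,
      c * ∑ ς, ‖x ς‖ ^ 2 ≤
          ∑ l, ‖(symbol (legendreJet m ι 1) (-legendreJet m ι (-1)) z *ᵥ x) l‖ ^ 2 ∧
        ∑ l, ‖(symbol (legendreJet m ι 1) (-legendreJet m ι (-1)) z *ᵥ x) l‖ ^ 2 ≤
          C * ∑ ς, ‖x ς‖ ^ 2 := by
  set S := symbol (legendreJet m ι 1) (-legendreJet m ι (-1))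
  set T : ℂ → EuclideanSpace ℂ (Fin ι) →ₗ[ℂ] EuclideanSpace ℂ (Fin m) :=
    fun z => Matrix.toLpLin 2 2 (S z)
  have hT : Continuous fun p : ℂ × EuclideanSpace ℂ (Fin ι) => T p.1 p.2 := by
    simp only [T, Matrix.toLpLin_apply]
    refine (PiLp.continuous_toLp 2 _).comp (Continuous.matrix_mulVec ?_ ?_)
    · exact (continuous_symbol _ _).comp continuous_fst
    · exact (PiLp.continuous_ofLp 2 _).comp continuous_snd
  have hinj : ∀ z ∈ Metric.sphere (0 : ℂ) 1, Function.Injective (T z) := fun z _ => by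
    refine (injective_iff_map_eq_zero _).mpr fun x hx => ?_
    simp only [T, Matrix.toLpLin_apply, WithLp.toLp_eq_zero] at hx
    simpa using symbol_legendreJet_mulVec_eq_zero hιm hx
  obtain ⟨c, C, hc, hcC, hbound⟩ := (isCompact_sphere (0 : ℂ) 1).exists_pos_norm_bounds T hT hinj
  refine ⟨c ^ 2, C ^ 2, by positivity, pow_le_pow_left₀ hc.le hcC 2, fun z hz x => ?_⟩
  obtain ⟨hlow, hup⟩ := hbound z (by simpa using hz) (WithLp.toLp 2 x)
  have hx : ‖WithLp.toLp 2 x‖ ^ 2 = ∑ ς, ‖x ς‖ ^ 2 := EuclideanSpace.norm_sq_eq _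
  have hTx : ‖T z (WithLp.toLp 2 x)‖ ^ 2 = ∑ l, ‖(S z *ᵥ x) l‖ ^ 2 := by
    rw [EuclideanSpace.norm_sq_eq]
    simp [T, Matrix.toLpLin_apply]
  rw [← hx, ← hTx, ← mul_pow, ← mul_pow]
  exact ⟨pow_le_pow_left₀ (by positivity) hlow 2, pow_le_pow_left₀ (norm_nonneg _) hup 2⟩

open Real in
theorem sum_norm_sq_eq_circleAverage {N : ℕ} (w : Fin N → ℂ) :
    ∑ k, ‖w k‖ ^ 2 = circleAverage (fun z => ‖∑ k, w k * z ^ (k : ℕ)‖ ^ 2) 0 1 := by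
  set p : ℂ[X] := ∑ k : Fin N, monomial k (w k)
  have hcoeff : ∀ i, p.coeff i = ∑ k : Fin N, if i = k then w k else 0 := fun i => by
    simp only [p, finsetSum_coeff, coeff_monomial, eq_comm]
  have hsupp : p.support ⊆ Finset.range N := fun i hi => by
    by_contra hiN
    refine mem_support_iff.mp hi ((hcoeff i).trans (Finset.sum_eq_zero fun k _ => ?_))
    rw [if_neg (by simp at hiN; omega)]
  have heval : (fun z => ‖∑ k, w k * z ^ (k : ℕ)‖ ^ 2) = fun z => ‖p.eval z‖ ^ 2 := by
    simp [p, eval_finsetSum]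
  rw [heval, ← sum_sq_norm_coeff_eq_circleAverage,
    Finset.sum_subset hsupp fun i _ hi => by simp [notMem_support_iff.mp hi],
    ← Fin.sum_univ_eq_sum_range (fun i => ‖p.coeff i‖ ^ 2)]
  refine Finset.sum_congr rfl fun k _ => ?_
  simp [hcoeff, Fin.val_inj]

open Real in
theorem sum_sum_norm_sq_eq_circleAverage {γ : Type*} [Fintype γ] {N : ℕ} (w : γ → Fin N → ℂ) :
    ∑ i, ∑ k, ‖w i k‖ ^ 2 =
      circleAverage (fun z => ∑ i, ‖∑ k, w i k * z ^ (k : ℕ)‖ ^ 2) 0 1 := by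
  rw [circleAverage_fun_sum fun i _ => (Continuous.continuousOn (by fun_prop)).circleIntegrable
    zero_le_one]
  exact Finset.sum_congr rfl fun i _ => sum_norm_sq_eq_circleAverage (w i)

section BandMatrix

variable {α β : Type*}

def bandMatrix (κ : ℕ) (a b : Matrix α β ℝ) : Matrix (Fin κ × α) (Fin (κ + 1) × β) ℝ :=
  fun kς jl =>
    if (jl.1 : ℕ) = (kς.1 : ℕ) then a kς.2 jl.2
    else if (jl.1 : ℕ) = (kς.1 : ℕ) + 1 then b kς.2 jl.2
    else 0

theorem sum_bandMatrix_mul_pow (κ : ℕ) (a b : Matrix α β ℝ) (z : ℂ) (k : Fin κ) (ς : α)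
    (l : β) : ∑ j : Fin (κ + 1), (bandMatrix κ a b (k, ς) (j, l) : ℂ) * z ^ (j : ℕ) =
      symbol a b z l ς * z ^ (k : ℕ) := by
  have hentry : ∀ j : Fin (κ + 1), (bandMatrix κ a b (k, ς) (j, l) : ℂ) =
      (if j = k.castSucc then (a ς l : ℂ) else 0) + (if j = k.succ then (b ς l : ℂ) else 0) := by
    intro j
    simp only [bandMatrix, Fin.ext_iff, Fin.val_castSucc, Fin.val_succ]
    split_ifs <;> first | omega | simp
  simp only [hentry, add_mul, Finset.sum_add_distrib, ite_mul, zero_mul, Finset.sum_ite_eq',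
    Finset.mem_univ, if_true, Fin.val_castSucc, Fin.val_succ, symbol]
  ring

theorem vecMul_bandMatrix_sum_mul_pow [Fintype α] (κ : ℕ) (a b : Matrix α β ℝ)
    (v : Fin κ × α → ℝ) (z : ℂ) (l : β) :
    ∑ j : Fin (κ + 1), ((v ᵥ* bandMatrix κ a b) (j, l) : ℂ) * z ^ (j : ℕ) =
      (symbol a b z *ᵥ fun ς => ∑ k : Fin κ, (v (k, ς) : ℂ) * z ^ (k : ℕ)) l := by
  simp only [Matrix.vecMul, dotProduct, Complex.ofReal_sum, Complex.ofReal_mul, Finset.sum_mul,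
    Matrix.mulVec, Finset.mul_sum]
  rw [Finset.sum_comm, Fintype.sum_prod_type, Finset.sum_comm]
  refine Finset.sum_congr rfl fun ς _ => Finset.sum_congr rfl fun k _ => ?_
  simp only [mul_assoc, ← Finset.mul_sum, sum_bandMatrix_mul_pow]
  ring

open Real in
theorem sum_vecMul_bandMatrix_sq_bounds [Fintype α] [Fintype β] {a b : Matrix α β ℝ} {c C : ℝ}
    (hsymb : ∀ z : ℂ, ‖z‖ = 1 → ∀ x : α → ℂ,
      c * ∑ ς, ‖x ς‖ ^ 2 ≤ ∑ l, ‖(symbol a b z *ᵥ x) l‖ ^ 2 ∧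
        ∑ l, ‖(symbol a b z *ᵥ x) l‖ ^ 2 ≤ C * ∑ ς, ‖x ς‖ ^ 2)
    (κ : ℕ) (v : Fin κ × α → ℝ) :
    c * ∑ i, v i ^ 2 ≤ ∑ i, (v ᵥ* bandMatrix κ a b) i ^ 2 ∧
      ∑ i, (v ᵥ* bandMatrix κ a b) i ^ 2 ≤ C * ∑ i, v i ^ 2 := by
  set V : ℂ → α → ℂ := fun z ς => ∑ k : Fin κ, (v (k, ς) : ℂ) * z ^ (k : ℕ)
  set f : ℂ → ℝ := fun z => ∑ ς, ‖V z ς‖ ^ 2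
  set g : ℂ → ℝ := fun z => ∑ l, ‖(symbol a b z *ᵥ V z) l‖ ^ 2
  have hf : ∑ i, v i ^ 2 = circleAverage f 0 1 := by
    rw [← sum_sum_norm_sq_eq_circleAverage, Fintype.sum_prod_type, Finset.sum_comm]
    simp
  have hg_eq : g = fun z => ∑ l, ‖∑ j : Fin (κ + 1),
      ((v ᵥ* bandMatrix κ a b) (j, l) : ℂ) * z ^ (j : ℕ)‖ ^ 2 := by
    simp only [g, V, vecMul_bandMatrix_sum_mul_pow]
  have hg : ∑ i, (v ᵥ* bandMatrix κ a b) i ^ 2 = circleAverage g 0 1 := by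
    rw [hg_eq, ← sum_sum_norm_sq_eq_circleAverage, Fintype.sum_prod_type, Finset.sum_comm]
    simp
  have hfi : CircleIntegrable f 0 1 :=
    (Continuous.continuousOn (by fun_prop)).circleIntegrable zero_le_one
  have hgi : CircleIntegrable g 0 1 := by
    rw [hg_eq]; exact (Continuous.continuousOn (by fun_prop)).circleIntegrable zero_le_one
  have hsphere : ∀ z ∈ Metric.sphere (0 : ℂ) |1|, ‖z‖ = 1 := by simp
  rw [hf, hg, ← smul_eq_mul, ← smul_eq_mul C, ← circleAverage_smul, ← circleAverage_smul]
  exact ⟨circleAverage_mono hfi.const_smul hgi fun z hz => (hsymb z (hsphere z hz) (V z)).1,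
    circleAverage_mono hgi hfi.const_smul fun z hz => (hsymb z (hsphere z hz) (V z)).2⟩

end BandMatrix

theorem quadForm_mul_transpose {α β : Type*} [Fintype α] [Fintype β] (R : Matrix α β ℝ)
    (v : α → ℝ) : quadForm (R * Rᵀ) v = ∑ j, (v ᵥ* R) j ^ 2 := by
  have hquad : quadForm (R * Rᵀ) v = v ⬝ᵥ (R * Rᵀ) *ᵥ v := by
    simp only [quadForm, dotProduct, Matrix.mulVec, Finset.mul_sum]
    exact Finset.sum_congr rfl fun _ _ => Finset.sum_congr rfl fun _ _ => by ring
  rw [hquad, ← Matrix.mulVec_mulVec, Matrix.dotProduct_mulVec, Matrix.mulVec_transpose]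
  simp only [dotProduct, sq]

section Rayleigh

variable {α : Type*} [Fintype α] [Nonempty α]

theorem exists_sum_sq_eq_one : ∃ v : α → ℝ, ∑ i, v i ^ 2 = 1 := by
  classical
  obtain ⟨i⟩ := ‹Nonempty α›
  exact ⟨Pi.single i 1, by simp [sq, Pi.single_apply]⟩

theorem le_lamMin {A : Matrix α α ℝ} {c : ℝ} (h : ∀ v, ∑ i, v i ^ 2 = 1 → c ≤ quadForm A v) :
    c ≤ lamMin A := by
  obtain ⟨v, hv⟩ := exists_sum_sq_eq_one (α := α)
  exact le_csInf ⟨_, v, hv, rfl⟩ fun _ ⟨w, hw, hr⟩ => hr ▸ h w hw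

theorem lamMax_le {A : Matrix α α ℝ} {C : ℝ} (h : ∀ v, ∑ i, v i ^ 2 = 1 → quadForm A v ≤ C) :
    lamMax A ≤ C := by
  obtain ⟨v, hv⟩ := exists_sum_sq_eq_one (α := α)
  exact csSup_le ⟨_, v, hv, rfl⟩ fun _ ⟨w, hw, hr⟩ => hr ▸ h w hw

end Rayleigh

theorem statement18_general (m ι : ℕ) (hι1 : 1 ≤ ι) (hιm : ι ≤ m - 1) :
    ∃ c C : ℝ, 0 < c ∧ c ≤ C ∧
      ∀ κ : ℕ, 1 ≤ κ →
        (let R : Matrix (Fin κ × Fin ι) (Fin (κ + 1) × Fin m) ℝ :=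
          fun kς jl =>
            if (jl.1 : ℕ) = (kς.1 : ℕ) then
              iteratedDeriv (kς.2 : ℕ) (legendreNorm (jl.2 : ℕ)) 1
            else if (jl.1 : ℕ) = (kς.1 : ℕ) + 1 then
              -(iteratedDeriv (kς.2 : ℕ) (legendreNorm (jl.2 : ℕ)) (-1))
            else 0
        c ≤ lamMin (R * Rᵀ) ∧ lamMax (R * Rᵀ) ≤ C) := by
  obtain ⟨c, C, hc, hcC, hsymb⟩ := exists_symbol_legendreJet_bounds (m := m) (ι := ι) (by omega)
  refine ⟨c, C, hc, hcC, fun κ hκ => ?_⟩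
  have : Nonempty (Fin κ × Fin ι) := ⟨(⟨0, hκ⟩, ⟨0, hι1⟩)⟩
  set R := bandMatrix κ (legendreJet m ι 1) (-legendreJet m ι (-1))
  show c ≤ lamMin (R * Rᵀ) ∧ lamMax (R * Rᵀ) ≤ C
  have hbounds := sum_vecMul_bandMatrix_sq_bounds hsymb κ
  refine ⟨le_lamMin (A := R * Rᵀ) fun v hv => ?_, lamMax_le (A := R * Rᵀ) fun v hv => ?_⟩
  · simpa [quadForm_mul_transpose, hv] using (hbounds v).1
  · simpa [quadForm_mul_transpose, hv] using (hbounds v).2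

/-- Lemma 7.1 of the supplement: uniform eigenvalue bounds for
the spline continuity-restriction matrix. For the matrix `R(κ)` of `ῑ` continuity
restrictions at each of `κ` interior knots, expressed in the normalized Legendre
basis on each of the `κ+1` intervals, the eigenvalues of `R(κ)R(κ)'` are bounded
and bounded away from zero uniformly in `κ`. -/
theorem statement18 (m ι : ℕ) (hm : 2 ≤ m) (hι1 : 1 ≤ ι) (hιm : ι ≤ m - 1) :
    ∃ c C : ℝ, 0 < c ∧ c ≤ C ∧
      ∀ κ : ℕ, 1 ≤ κ →
        (let R : Matrix (Fin κ × Fin ι) (Fin (κ + 1) × Fin m) ℝ :=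
          fun kς jl =>
            if (jl.1 : ℕ) = (kς.1 : ℕ) then
              iteratedDeriv (kς.2 : ℕ) (legendreNorm (jl.2 : ℕ)) 1
            else if (jl.1 : ℕ) = (kς.1 : ℕ) + 1 then
              -(iteratedDeriv (kς.2 : ℕ) (legendreNorm (jl.2 : ℕ)) (-1))
            else 0
        c ≤ lamMin (R * Rᵀ) ∧ lamMax (R * Rᵀ) ≤ C) :=
  statement18_general m ι hι1 hιm
end
end
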